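/- arXiv:1903.07064 — 5 statements merged into one kernel-verified Lean document; each statement's English description precedes it below -/
import Mathlib

section
/- If q is a prime power, then there exist q − 1 mutually orthogonal Latin squares of side q. -/
/-- A Latin square of side `q`: each row and each column is a bijection. -/
def IsLatinSquare {q : ℕ} (L : Fin q → Fin q → Fin q) : Prop :=
  (∀ x, Function.Bijective fun y => L x y) ∧ (∀ y, Function.Bijective fun x => L x y)

/-- A family of `k` mutually orthogonal Latin squares of side `q`:
each is a Latin square and superimposing any two of them yields each ordered
pair of symbols exactly once. -/
def AreMOLS {q k : ℕ} (Ls : Fin k → Fin q → Fin q → Fin q) : Prop :=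
  (∀ i, IsLatinSquare (Ls i)) ∧
    ∀ i j, i ≠ j →
      Function.Bijective fun p : Fin q × Fin q => (Ls i p.1 p.2, Ls j p.1 p.2)

/-- If q is a prime power, then there exist q − 1 mutually orthogonal Latin
squares of side q. -/
theorem stmt_7 (q : ℕ) (hq : IsPrimePow q) :
    ∃ Ls : Fin (q - 1) → Fin q → Fin q → Fin q, AreMOLS Ls := by
  obtain ⟨p, n, hp, hn, rfl⟩ := hq
  haveI : Fact p.Prime := ⟨hp.nat_prime⟩
  let F := GaloisField p n
  haveI : Fintype F := Fintype.ofFinite _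
  haveI : Fintype Fˣ := Fintype.ofFinite _
  have hcard : Fintype.card F = p ^ n := by
    rw [← Nat.card_eq_fintype_card]; exact GaloisField.card p n hn.ne'
  have e : F ≃ Fin (p ^ n) := Fintype.equivFinOfCardEq hcard
  have hcardu : Fintype.card Fˣ = p ^ n - 1 := by
    rw [← Nat.card_eq_fintype_card, Nat.card_units, Nat.card_eq_fintype_card, hcard]
  have u : Fin (p ^ n - 1) ≃ Fˣ := (Fintype.equivFinOfCardEq hcardu).symm
  refine ⟨fun i x y => e ((u i : F) * e.symm x + e.symm y), ?_, ?_⟩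
  · intro i
    constructor
    · intro x
      rw [← Finite.injective_iff_bijective]
      intro y₁ y₂ h
      simp only [e.apply_eq_iff_eq, add_right_inj] at h
      exact e.symm.injective h
    · intro y
      rw [← Finite.injective_iff_bijective]
      intro x₁ x₂ h
      simp only [e.apply_eq_iff_eq, add_left_inj, mul_right_inj' (u _).ne_zero] at h
      exact e.symm.injective h
  · intro i j hij
    rw [← Finite.injective_iff_bijective]
    intro ⟨x₁, y₁⟩ ⟨x₂, y₂⟩ h
    simp only [Prod.mk.injEq, e.apply_eq_iff_eq] at h
    obtain ⟨h1, h2⟩ := h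
    have hab : (u i : F) ≠ (u j : F) := by
      simp only [ne_eq, Units.ext_iff.symm]
      exact fun hc => hij (u.injective hc)
    have hx : e.symm x₁ = e.symm x₂ := by
      have := sub_eq_sub_iff_sub_eq_sub.mpr (congrArg₂ (· - ·) h1 h2)
      have h3 : ((u i : F) - (u j : F)) * e.symm x₁ = ((u i : F) - (u j : F)) * e.symm x₂ := by
        linear_combination h1 - h2
      exact mul_left_cancel₀ (sub_ne_zero.mpr hab) h3
    have hy : e.symm y₁ = e.symm y₂ := by
      rw [hx] at h1
      exact add_left_cancel h1
    exact Prod.ext (e.symm.injective hx) (e.symm.injective hy)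
end

section
/- Suppose there exists a (u+1)-GDD of type q^(u+1), and for each d in a set D of non-negative integers there exists a 4-GDD of type h^u d^1. Then for any choice d_1, …, d_q ∈ D, there exists a 4-GDD of type (h·q)^u (d_1 + d_2 + ⋯ + d_q)^1. -/
/-!
Wilson's fundamental construction. Give the points of one group `G₀` of the master design the
weights `d₁, …, d_q` and all other points the weight `h`, replace each point `x` by `w x`
copies, and fill each inflated block `b` with a 4-GDD whose groups are the copies of the points
of `b`. A block of size `u + 1` in a GDD with `u + 1` groups meets every group exactly once, so
the required ingredient has type `h^u d_i^1`. Two copies of points in distinct master groups are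
covered in the ingredient on the unique master block through the two points; two copies of the
same point lie in a group of that ingredient and hence in no block. To glue the ingredients,
each is first transported onto the copies `Σ x : b, Fin (w x)` with the fibres as groups.
-/

/-- A `K`-group divisible design on point set `V`: `Gs` is the multiset of groups
(forming a partition of `V`), `Bs` the set of blocks, `K` the set of allowed block
sizes.  Every pair of points from distinct groups lies in exactly one block and no
pair of points from the same group lies in any block. -/
structure IsGDD (V : Type) (Gs : Multiset (Finset V)) (Bs : Finset (Finset V))
    (K : Set ℕ) : Prop where
  partition : ∀ v : V, ∃ G s, Gs = G ::ₘ s ∧ v ∈ G ∧ ∀ G' ∈ s, v ∉ G'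
  sizes : ∀ b ∈ Bs, b.card ∈ K
  cross : ∀ x y : V, x ≠ y → (∀ G ∈ Gs, ¬(x ∈ G ∧ y ∈ G)) →
      ∃! b, b ∈ Bs ∧ x ∈ b ∧ y ∈ b
  within : ∀ G ∈ Gs, ∀ x ∈ G, ∀ y ∈ G, x ≠ y → ∀ b ∈ Bs, ¬(x ∈ b ∧ y ∈ b)

/-- Existence of a `K`-GDD whose multiset of group sizes is `gtype`. -/
def GDDExists (K : Set ℕ) (gtype : Multiset ℕ) : Prop :=
  ∃ (V : Type) (_ : Fintype V) (Gs : Multiset (Finset V)) (Bs : Finset (Finset V)),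
    IsGDD V Gs Bs K ∧ Gs.map Finset.card = gtype

open Finset

theorem Multiset.sum_map_boole {α : Type*} (m : Multiset α) (p : α → Prop) [DecidablePred p] :
    (m.map fun a => if p a then 1 else 0).sum = m.countP p := by
  induction m using Multiset.induction_on with
  | empty => simp
  | cons a m ih => simp [Multiset.countP_cons, ih, add_comm]

theorem Multiset.eq_one_of_le_one_of_sum_eq_card {m : Multiset ℕ} (hle : ∀ a ∈ m, a ≤ 1)
    (hsum : m.sum = Multiset.card m) {a : ℕ} (ha : a ∈ m) : a = 1 := by
  obtain ⟨t, rfl⟩ := Multiset.exists_cons_of_mem ha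
  have ht : t.sum ≤ Multiset.card t := by
    simpa using Multiset.sum_le_card_nsmul t 1 fun b hb => hle b (Multiset.mem_cons_of_mem hb)
  have := hle a (Multiset.mem_cons_self a t)
  rw [Multiset.sum_cons, Multiset.card_cons] at hsum
  omega

theorem Multiset.exists_eq_map_of_map_eq {α β ι : Type*} [Nonempty α] [DecidableEq ι]
    {m : Multiset α} {f : α → β} {w : ι → β} (s : Finset ι) (h : m.map f = s.val.map w) :
    ∃ g : ι → α, m = s.val.map g ∧ ∀ i ∈ s, f (g i) = w i := by
  induction s using Finset.induction_on generalizing m with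
  | empty => exact ⟨fun _ => Classical.arbitrary α, by simpa using h, by simp⟩
  | insert a s ha ih =>
    rw [Finset.insert_val_of_notMem ha, Multiset.map_cons] at h
    obtain ⟨x, hx, hfx⟩ := Multiset.mem_map.1 (h ▸ Multiset.mem_cons_self (w a) _)
    obtain ⟨t, rfl⟩ := Multiset.exists_cons_of_mem hx
    rw [Multiset.map_cons, hfx, Multiset.cons_inj_right] at h
    obtain ⟨g, rfl, hg⟩ := ih h
    have hg_upd : ∀ i ∈ s, Function.update g a x i = g i := fun i hi =>
      Function.update_of_ne (ne_of_mem_of_not_mem hi ha) _ _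
    refine ⟨Function.update g a x, ?_, ?_⟩
    · rw [Finset.insert_val_of_notMem ha, Multiset.map_cons, Function.update_self,
        Multiset.map_congr rfl hg_upd]
    · intro i hi
      rcases Finset.mem_insert.1 hi with rfl | hi
      · rwa [Function.update_self]
      · rw [hg_upd i hi, hg i hi]

theorem Finset.map_val_eq_cons_replicate {α β : Type*} [DecidableEq α] {b S : Finset α} {x : α}
    {w : α → β} {c : β} (hx : b ∩ S = {x}) (hw : ∀ y ∉ S, w y = c) :
    b.val.map w = w x ::ₘ Multiset.replicate (#b - 1) c := by
  have hin : b.val.filter (· ∈ S) = {x} := by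
    rw [← Finset.filter_val, Finset.filter_mem_eq_inter, hx]
    rfl
  have hcard := congrArg Multiset.card (Multiset.filter_add_not (· ∈ S) b.val)
  rw [Multiset.card_add, hin, Multiset.card_singleton] at hcard
  have hout : (b.val.filter (· ∉ S)).map w = Multiset.replicate (#b - 1) c := by
    rw [Multiset.map_congr rfl fun y hy => hw y (Multiset.mem_filter.1 hy).2, Multiset.map_const']
    congr 1
    change _ = Multiset.card b.val - 1
    omega
  rw [← Multiset.filter_add_not (· ∈ S) b.val, Multiset.map_add, hin, hout]
  rfl

namespace IsGDD

variable {V V' : Type} {Gs : Multiset (Finset V)} {Bs : Finset (Finset V)} {K : Set ℕ}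

theorem exists_mem_group (H : IsGDD V Gs Bs K) (v : V) : ∃ G ∈ Gs, v ∈ G := by
  obtain ⟨G, s, rfl, hv, -⟩ := H.partition v
  exact ⟨G, Multiset.mem_cons_self G s, hv⟩

theorem countP_mem_eq_one [DecidableEq V] (H : IsGDD V Gs Bs K) (v : V) :
    Gs.countP (v ∈ ·) = 1 := by
  obtain ⟨G, s, rfl, hvG, hvs⟩ := H.partition v
  rw [Multiset.countP_cons_of_pos s hvG, Multiset.countP_eq_zero.2 hvs]

theorem disjoint_of_eq_cons (H : IsGDD V Gs Bs K) {G G' : Finset V} {s : Multiset (Finset V)}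
    (hGs : Gs = G ::ₘ s) (hG' : G' ∈ s) : Disjoint G G' := by
  classical
  refine Finset.disjoint_left.2 fun v hvG hvG' => ?_
  have hcount := H.countP_mem_eq_one v
  rw [hGs, Multiset.countP_cons_of_pos s hvG, add_eq_right, Multiset.countP_eq_zero] at hcount
  exact hcount G' hG' hvG'

theorem card_inter_le_one [DecidableEq V] (H : IsGDD V Gs Bs K) {b G : Finset V} (hb : b ∈ Bs)
    (hG : G ∈ Gs) : #(b ∩ G) ≤ 1 :=
  Finset.card_le_one.2 fun x hx y hy => by
    by_contra hxy
    rw [Finset.mem_inter] at hx hy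
    exact H.within G hG x hx.2 y hy.2 hxy b hb ⟨hx.1, hy.1⟩

theorem sum_card_inter [DecidableEq V] (H : IsGDD V Gs Bs K) (b : Finset V) :
    (Gs.map fun G => #(b ∩ G)).sum = #b := by
  have hcount (x : V) : (Gs.map fun G => if x ∈ G then 1 else 0).sum = 1 := by
    rw [Multiset.sum_map_boole, H.countP_mem_eq_one]
  calc (Gs.map fun G => #(b ∩ G)).sum
      = (Gs.map fun G => ∑ x ∈ b, if x ∈ G then 1 else 0).sum := by
        simp only [Finset.sum_boole, Finset.filter_mem_eq_inter, Nat.cast_id]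
    _ = ∑ x ∈ b, (Gs.map fun G => if x ∈ G then 1 else 0).sum := Multiset.sum_map_sum_map _ _
    _ = #b := by simp [hcount]

theorem card_inter_eq_one [DecidableEq V] (H : IsGDD V Gs Bs K) {b G : Finset V} (hb : b ∈ Bs)
    (hcard : #b = Multiset.card Gs) (hG : G ∈ Gs) : #(b ∩ G) = 1 := by
  refine Multiset.eq_one_of_le_one_of_sum_eq_card ?_ ?_
    (Multiset.mem_map_of_mem (fun G => #(b ∩ G)) hG)
  · simpa using fun G hG => H.card_inter_le_one hb hG
  · rw [H.sum_card_inter, hcard, Multiset.card_map]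

theorem exists_map_val_eq_cons_replicate [DecidableEq V] {β : Type*} (H : IsGDD V Gs Bs K)
    {b G : Finset V} (hb : b ∈ Bs) (hcard : #b = Multiset.card Gs) (hG : G ∈ Gs) {w : V → β}
    {c : β} (hw : ∀ y ∉ G, w y = c) :
    ∃ x ∈ G, b.val.map w = w x ::ₘ Multiset.replicate (#b - 1) c := by
  obtain ⟨x, hx⟩ := Finset.card_eq_one.1 (H.card_inter_eq_one hb hcard hG)
  exact ⟨x, (Finset.mem_inter.1 (hx ▸ Finset.mem_singleton_self x)).2,
    Finset.map_val_eq_cons_replicate hx hw⟩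

theorem sum_eq_card_nsmul_of_mem {β : Type*} [AddCommMonoid β] {G₀ G : Finset V}
    {rest : Multiset (Finset V)} (H : IsGDD V (G₀ ::ₘ rest) Bs K) {w : V → β} {c : β}
    (hw : ∀ y ∉ G₀, w y = c) (hG : G ∈ rest) : ∑ x ∈ G, w x = #G • c := by
  have hdisj := H.disjoint_of_eq_cons rfl hG
  rw [Finset.sum_congr rfl fun x hx => hw x (Finset.disjoint_right.1 hdisj hx), Finset.sum_const]

theorem map_equiv (H : IsGDD V Gs Bs K) (e : V ≃ V') :
    IsGDD V' (Gs.map (Finset.map e.toEmbedding))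
      (Bs.map (Finset.mapEmbedding e.toEmbedding).toEmbedding) K where
  partition v := by
    obtain ⟨G, s, rfl, hv, hno⟩ := H.partition (e.symm v)
    refine ⟨G.map e.toEmbedding, s.map (Finset.map e.toEmbedding), Multiset.map_cons _ _ _,
      Finset.mem_map_equiv.2 hv, ?_⟩
    simpa [Finset.mem_map_equiv] using hno
  sizes b hb := by
    obtain ⟨b₀, hb₀, rfl⟩ := Finset.mem_map.1 hb
    simpa using H.sizes b₀ hb₀
  cross x y hxy hno := by
    have hno' : ∀ G ∈ Gs, ¬(e.symm x ∈ G ∧ e.symm y ∈ G) := by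
      simpa [Finset.mem_map_equiv] using hno
    obtain ⟨b, ⟨hb, hxb, hyb⟩, huniq⟩ := H.cross _ _ (e.symm.injective.ne hxy) hno'
    refine ⟨b.map e.toEmbedding, ⟨Finset.mem_map_of_mem _ hb, Finset.mem_map_equiv.2 hxb,
      Finset.mem_map_equiv.2 hyb⟩, ?_⟩
    rintro b' ⟨hb', hxb', hyb'⟩
    obtain ⟨b₀, hb₀, rfl⟩ := Finset.mem_map.1 hb'
    rw [huniq b₀ ⟨hb₀, Finset.mem_map_equiv.1 hxb', Finset.mem_map_equiv.1 hyb'⟩]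
    rfl
  within G hG x hx y hy hxy b hb hxyb := by
    obtain ⟨G₀, hG₀, rfl⟩ := Multiset.mem_map.1 hG
    obtain ⟨b₀, hb₀, rfl⟩ := Finset.mem_map.1 hb
    simp only [RelEmbedding.coe_toEmbedding, Finset.mapEmbedding_apply, Finset.mem_map_equiv]
      at hx hy hxyb
    exact H.within G₀ hG₀ _ hx _ hy (e.symm.injective.ne hxy) b₀ hb₀ hxyb

end IsGDD

namespace GDD

variable {ι : Type}

def inflate (w : ι → ℕ) (s : Finset ι) : Finset (Σ i, Fin (w i)) :=
  s.sigma fun _ => univ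

@[simp]
theorem mem_inflate {w : ι → ℕ} {s : Finset ι} {p : Σ i, Fin (w i)} :
    p ∈ inflate w s ↔ p.1 ∈ s := by
  simp [inflate]

theorem card_inflate (w : ι → ℕ) (s : Finset ι) : #(inflate w s) = ∑ i ∈ s, w i := by
  simp [inflate]

def fiberGroups [Fintype ι] (w : ι → ℕ) : Multiset (Finset (Σ i, Fin (w i))) :=
  univ.val.map fun i => inflate w {i}

theorem exists_mem_fiberGroups_iff [Fintype ι] {w : ι → ℕ} {p p' : Σ i, Fin (w i)} :
    (∃ G ∈ fiberGroups w, p ∈ G ∧ p' ∈ G) ↔ p.1 = p'.1 := by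
  simp [fiberGroups, eq_comm]

def liftFiber (w : ι → ℕ) (b : Finset ι) : (Σ x : b, Fin (w x)) ↪ Σ x : ι, Fin (w x) :=
  Function.Embedding.sigmaMap (Function.Embedding.subtype _) fun _ => Function.Embedding.refl _

theorem mem_map_liftFiber {w : ι → ℕ} {b : Finset ι} {B : Finset (Σ x : b, Fin (w x))}
    {p : Σ x : ι, Fin (w x)} :
    p ∈ B.map (liftFiber w b) ↔ ∃ hp : p.1 ∈ b, ⟨⟨p.1, hp⟩, p.2⟩ ∈ B := by
  constructor
  · intro h
    obtain ⟨r, hr, rfl⟩ := Finset.mem_map.1 h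
    exact ⟨r.1.2, hr⟩
  · rintro ⟨hp, h⟩
    exact Finset.mem_map.2 ⟨_, h, rfl⟩

variable [DecidableEq ι] {w : ι → ℕ} {Bs : Finset (Finset ι)}

def inflatedBlocks (𝓑 : ∀ b : Bs, Finset (Finset (Σ x : b.1, Fin (w x)))) :
    Finset (Finset (Σ x : ι, Fin (w x))) :=
  Bs.attach.biUnion fun b => (𝓑 b).map (Finset.mapEmbedding (liftFiber w b.1)).toEmbedding

theorem mem_inflatedBlocks {𝓑 : ∀ b : Bs, Finset (Finset (Σ x : b.1, Fin (w x)))}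
    {B : Finset (Σ x : ι, Fin (w x))} :
    B ∈ inflatedBlocks 𝓑 ↔ ∃ b, ∃ C ∈ 𝓑 b, C.map (liftFiber w b.1) = B := by
  simp [inflatedBlocks]

end GDD

namespace IsGDD

open GDD

section Fibers

variable {V ι : Type} [Fintype ι] {K : Set ℕ}

theorem exists_index_of_eq_map {g : ι → Finset V} {Bs : Finset (Finset V)}
    (H : IsGDD V (univ.val.map g) Bs K) : ∃ π : V → ι, ∀ v i, v ∈ g i ↔ π v = i := by
  classical
  have hsingle (v : V) : ∃ j, univ.filter (fun i => v ∈ g i) = {j} := by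
    rw [← Finset.card_eq_one, ← H.countP_mem_eq_one v, Multiset.countP_map]
    rfl
  choose π hπ using hsingle
  exact ⟨π, fun v i => by simpa [eq_comm] using Finset.ext_iff.1 (hπ v) i⟩

variable {w : ι → ℕ} {Bs : Finset (Finset (Σ i, Fin (w i)))}

theorem existsUnique_of_fst_ne (H : IsGDD _ (fiberGroups w) Bs K) {p p' : Σ i, Fin (w i)}
    (hpp' : p.1 ≠ p'.1) : ∃! B, B ∈ Bs ∧ p ∈ B ∧ p' ∈ B :=
  H.cross p p' (fun h => hpp' (congrArg Sigma.fst h))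
    fun G hG hG' => hpp' (exists_mem_fiberGroups_iff.1 ⟨G, hG, hG'⟩)

theorem not_both_mem_of_fst_eq (H : IsGDD _ (fiberGroups w) Bs K) {p p' : Σ i, Fin (w i)}
    (hne : p ≠ p') (hpp' : p.1 = p'.1) {B : Finset (Σ i, Fin (w i))} (hB : B ∈ Bs) :
    ¬(p ∈ B ∧ p' ∈ B) := by
  obtain ⟨G, hG, hpG, hp'G⟩ := exists_mem_fiberGroups_iff.2 hpp'
  exact H.within G hG p hpG p' hp'G hne B hB

end Fibers

variable {W : Type} [DecidableEq W] {w : W → ℕ} {Gs : Multiset (Finset W)}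
  {Bs : Finset (Finset W)} {K K' : Set ℕ}

theorem isGDD_inflate (H : IsGDD W Gs Bs K')
    {𝓑 : ∀ b : Bs, Finset (Finset (Σ x : b.1, Fin (w x)))}
    (h𝓑 : ∀ b, IsGDD _ (fiberGroups fun x : b.1 => w x) (𝓑 b) K) :
    IsGDD (Σ x : W, Fin (w x)) (Gs.map (inflate w)) (inflatedBlocks 𝓑) K where
  partition p := by
    obtain ⟨G, s, rfl, hp, hno⟩ := H.partition p.1
    exact ⟨inflate w G, s.map (inflate w), Multiset.map_cons _ _ _, mem_inflate.2 hp,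
      by simpa using hno⟩
  sizes B hB := by
    obtain ⟨b, C, hC, rfl⟩ := mem_inflatedBlocks.1 hB
    rw [Finset.card_map]
    exact (h𝓑 b).sizes C hC
  cross p p' _ hno := by
    have hno' : ∀ G ∈ Gs, ¬(p.1 ∈ G ∧ p'.1 ∈ G) := by simpa using hno
    have hfst : p.1 ≠ p'.1 := fun h => by
      obtain ⟨G, hG, hpG⟩ := H.exists_mem_group p.1
      exact hno' G hG ⟨hpG, h ▸ hpG⟩
    obtain ⟨b, ⟨hb, hpb, hp'b⟩, hbuniq⟩ := H.cross _ _ hfst hno'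
    obtain ⟨C, ⟨hC, hpC, hp'C⟩, hCuniq⟩ := (h𝓑 ⟨b, hb⟩).existsUnique_of_fst_ne
      (p := ⟨⟨p.1, hpb⟩, p.2⟩) (p' := ⟨⟨p'.1, hp'b⟩, p'.2⟩)
      (by simpa [Subtype.ext_iff] using hfst)
    refine ⟨C.map (liftFiber w b), ⟨mem_inflatedBlocks.2 ⟨⟨b, hb⟩, C, hC, rfl⟩,
      mem_map_liftFiber.2 ⟨hpb, hpC⟩, mem_map_liftFiber.2 ⟨hp'b, hp'C⟩⟩, ?_⟩
    rintro B ⟨hB, hpB, hp'B⟩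
    obtain ⟨c, D, hD, rfl⟩ := mem_inflatedBlocks.1 hB
    obtain ⟨hpc, hpD⟩ := mem_map_liftFiber.1 hpB
    obtain ⟨hp'c, hp'D⟩ := mem_map_liftFiber.1 hp'B
    obtain rfl : c = ⟨b, hb⟩ := Subtype.ext (hbuniq c.1 ⟨c.2, hpc, hp'c⟩)
    rw [hCuniq D ⟨hD, hpD, hp'D⟩]
  within GG hGG p hp p' hp' hne B hB hpp'B := by
    obtain ⟨G, hG, rfl⟩ := Multiset.mem_map.1 hGG
    obtain ⟨c, C, hC, rfl⟩ := mem_inflatedBlocks.1 hB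
    obtain ⟨⟨hpc, hpC⟩, hp'c, hp'C⟩ := And.imp mem_map_liftFiber.1 mem_map_liftFiber.1 hpp'B
    by_cases hfst : p.1 = p'.1
    · exact (h𝓑 c).not_both_mem_of_fst_eq
        (p := ⟨⟨p.1, hpc⟩, p.2⟩) (p' := ⟨⟨p'.1, hp'c⟩, p'.2⟩)
        (fun h => hne (congrArg (liftFiber w c.1) h)) (Subtype.ext hfst) hC ⟨hpC, hp'C⟩
    · exact H.within G hG _ (mem_inflate.1 hp) _ (mem_inflate.1 hp') hfst c.1 c.2 ⟨hpc, hp'c⟩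

end IsGDD

open GDD in
theorem GDDExists.exists_isGDD_fiberGroups {ι : Type} [Fintype ι] [DecidableEq ι]
    {w : ι → ℕ} {K : Set ℕ} (h : GDDExists K (univ.val.map w)) :
    ∃ Bs, IsGDD (Σ i, Fin (w i)) (fiberGroups w) Bs K := by
  obtain ⟨V, _, Gs, Bs, H, hGs⟩ := h
  obtain ⟨g, rfl, hg⟩ := Multiset.exists_eq_map_of_map_eq univ hGs
  obtain ⟨π, hπ⟩ := H.exists_index_of_eq_map
  let e : V ≃ Σ i, Fin (w i) := (Equiv.sigmaFiberEquiv π).symm.trans <|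
    Equiv.sigmaCongrRight fun i => (Equiv.subtypeEquivRight fun v => (hπ v i).symm).trans <|
      (g i).equivFin.trans (finCongr (hg i (mem_univ i)))
  have he (v : V) : (e v).1 = π v := rfl
  have hgroups : (univ.val.map g).map (Finset.map e.toEmbedding) = fiberGroups w := by
    rw [Multiset.map_map]
    refine Multiset.map_congr rfl fun i _ => Finset.ext fun p => ?_
    rw [Function.comp_apply, Finset.mem_map_equiv, hπ, ← he, Equiv.apply_symm_apply, mem_inflate,
      Finset.mem_singleton]
  exact ⟨_, hgroups ▸ H.map_equiv e⟩

open GDD in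
theorem IsGDD.gddExists_inflate {W : Type} [Fintype W] [DecidableEq W] {Gs : Multiset (Finset W)}
    {Bs : Finset (Finset W)} {K K' : Set ℕ} (H : IsGDD W Gs Bs K') (w : W → ℕ)
    (hfill : ∀ b ∈ Bs, GDDExists K (b.val.map w)) :
    GDDExists K (Gs.map fun G => ∑ x ∈ G, w x) := by
  have hcanonical (b : Bs) : ∃ 𝓑, IsGDD _ (fiberGroups fun x : b.1 => w x) 𝓑 K := by
    refine GDDExists.exists_isGDD_fiberGroups ?_
    convert hfill b b.2 using 1
    exact Multiset.attach_map_val' _ w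
  choose 𝓑 h𝓑 using hcanonical
  refine ⟨_, inferInstance, _, _, H.isGDD_inflate h𝓑, ?_⟩
  simp [Multiset.map_map, card_inflate]

/-- Fundamental weighting construction: given a (u+1)-GDD of type q^(u+1) and
4-GDDs of type h^u d^1 for every d ∈ D, for any d_1, …, d_q ∈ D there is a
4-GDD of type (h·q)^u (d_1 + ⋯ + d_q)^1. -/
theorem stmt_8 (h u q : ℕ) (D : Set ℕ)
    (hmaster : GDDExists {u + 1} (Multiset.replicate (u + 1) q))
    (hD : ∀ d ∈ D, GDDExists {4} (Multiset.replicate u h + {d}))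
    (ds : Fin q → ℕ) (hds : ∀ i, ds i ∈ D) :
    GDDExists {4} (Multiset.replicate u (h * q) + {∑ i, ds i}) := by
  classical
  obtain ⟨W, _, Gs, Bs, H, hGs⟩ := hmaster
  obtain ⟨G₀, hG₀⟩ := Multiset.exists_mem_of_ne_zero (by rintro rfl; simp at hGs : Gs ≠ 0)
  obtain ⟨rest, rfl⟩ := Multiset.exists_cons_of_mem hG₀
  have hG₀card : #G₀ = q :=
    Multiset.eq_of_mem_replicate (hGs ▸ Multiset.mem_map_of_mem _ hG₀)
  rw [Multiset.map_cons, hG₀card, Multiset.replicate_succ, Multiset.cons_inj_right] at hGs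
  let e : G₀ ≃ Fin q := G₀.equivFin.trans (finCongr hG₀card)
  let w : W → ℕ := fun x => if hx : x ∈ G₀ then ds (e ⟨x, hx⟩) else h
  have hw : ∀ x ∉ G₀, w x = h := fun x hx => dif_neg hx
  have hrest : Multiset.card rest = u := by simpa using congrArg Multiset.card hGs
  have hsum₀ : ∑ x ∈ G₀, w x = ∑ i, ds i :=
    (Finset.sum_dite_of_true (fun _ hx => hx) _ _).trans (e.sum_comp ds)
  have hsum_rest : rest.map (fun G => ∑ x ∈ G, w x) = Multiset.replicate u (h * q) := by
    refine Multiset.eq_replicate.2 ⟨by rw [Multiset.card_map, hrest], fun n hn => ?_⟩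
    obtain ⟨G, hG, rfl⟩ := Multiset.mem_map.1 hn
    have hGcard : #G = q := Multiset.eq_of_mem_replicate (hGs ▸ Multiset.mem_map_of_mem _ hG)
    rw [H.sum_eq_card_nsmul_of_mem hw hG, hGcard, smul_eq_mul, mul_comm]
  have hblock : ∀ b ∈ Bs, GDDExists {4} (b.val.map w) := by
    intro b hb
    have hbcard : #b = u + 1 := H.sizes b hb
    obtain ⟨x, hxG₀, hbw⟩ := H.exists_map_val_eq_cons_replicate hb
      (by rw [hbcard, Multiset.card_cons, hrest]) (Multiset.mem_cons_self G₀ rest) hw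
    rw [hbw, hbcard, Nat.add_sub_cancel, ← Multiset.singleton_add, add_comm,
      show w x = ds (e ⟨x, hxG₀⟩) from dif_pos hxG₀]
    exact hD _ (hds _)
  have hinflated := H.gddExists_inflate w hblock
  rwa [Multiset.map_cons, hsum₀, hsum_rest, ← Multiset.singleton_add, add_comm] at hinflated
end

section
/- Let h, u, q be positive integers with h ≡ 2 or 4 (mod 6), u ≡ 0 (mod 3), u ≥ 6, and 3 ∤ q. Suppose there exists a (u+1)-GDD of type q^(u+1), and suppose that for every d with d ≡ h (mod 3) and d_min ≤ d ≤ h(u−1)/2 there exists a 4-GDD of type h^u d^1, where d_min is the least positive integer congruent to h mod 3. Then for every m with m ≡ h·q (mod 3) and q·d_min ≤ m ≤ q·h·(u−1)/2, there exists a 4-GDD of type (h·q)^u m^1. -/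
/-!
Wilson's fundamental construction. In the master (u+1)-GDD of type q^(u+1) every block has
u + 1 points in distinct groups, so it meets every group exactly once. Fix a group G₀, give
weight h to each point outside G₀ and a weight d_v ∈ D = {d_min, d_min + 3, …, h(u−1)/2} to each
point v ∈ G₀; since D is an arithmetic progression of difference 3, the d_v can be chosen to sum
to m. Replace every point v by w(v) copies, and every block, whose weight type is h^u d_v^1, by a
4-GDD of that type placed on the copies of its points. The result is a 4-GDD whose groups are the
copies of the master groups, of sizes hq (u times) and m.
-/

open Finset

/-- The `partition` field of `IsGDD`; only empty groups can occur more than once. -/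
def IsGroupPartition {V : Type} (P : Multiset (Finset V)) : Prop :=
  ∀ v : V, ∃ G s, P = G ::ₘ s ∧ v ∈ G ∧ ∀ G' ∈ s, v ∉ G'

section Partition

variable {V W : Type} {P : Multiset (Finset V)}

theorem isGroupPartition_iff_countP_eq_one [DecidableEq V] :
    IsGroupPartition P ↔ ∀ v, P.countP (v ∈ ·) = 1 := by
  refine forall_congr' fun v => ⟨?_, fun h => ?_⟩
  · rintro ⟨G, s, rfl, hv, hs⟩
    rw [Multiset.countP_cons_of_pos (p := (v ∈ ·)) _ hv, Multiset.countP_eq_zero.mpr hs]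
  · obtain ⟨G, hG, hv⟩ := Multiset.countP_pos.mp (h ▸ Nat.one_pos)
    refine ⟨G, P.erase G, (Multiset.cons_erase hG).symm, hv, Multiset.countP_eq_zero.mp ?_⟩
    rw [← Multiset.cons_erase hG, Multiset.countP_cons_of_pos (p := (v ∈ ·)) _ hv] at h
    omega

theorem IsGroupPartition.disjoint_of_mem_cons {G G' : Finset V} {s : Multiset (Finset V)}
    (hP : IsGroupPartition (G ::ₘ s)) (hG' : G' ∈ s) : Disjoint G G' := by
  classical
  refine Finset.disjoint_left.mpr fun v hv hv' => ?_
  have h := isGroupPartition_iff_countP_eq_one.mp hP v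
  rw [Multiset.countP_cons_of_pos (p := (v ∈ ·)) _ hv] at h
  exact (Multiset.countP_pos (p := (v ∈ ·)).mpr ⟨G', hG', hv'⟩).ne' (by omega)

theorem IsGroupPartition.map_sum_eq_replicate_add_singleton {G₀ : Finset V}
    {rest : Multiset (Finset V)} (hP : IsGroupPartition (G₀ ::ₘ rest)) {q : ℕ}
    (hcard : ∀ G ∈ rest, G.card = q) {w : V → ℕ} {c : ℕ} (hw : ∀ v ∉ G₀, w v = c) :
    (G₀ ::ₘ rest).map (fun G => ∑ v ∈ G, w v) =
      Multiset.replicate (Multiset.card rest) (c * q) + {∑ v ∈ G₀, w v} := by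
  rw [Multiset.map_cons, add_comm, Multiset.singleton_add]
  congr
  refine Multiset.eq_replicate.mpr ⟨Multiset.card_map _ _, fun n hn => ?_⟩
  obtain ⟨G, hG, rfl⟩ := Multiset.mem_map.mp hn
  rw [sum_congr rfl fun v hv => hw v (disjoint_right.mp (hP.disjoint_of_mem_cons hG) hv),
    sum_const, hcard G hG, smul_eq_mul, mul_comm]

theorem IsGroupPartition.exists_proj {ι : Type} [Fintype ι] {f : ι → Finset V}
    (hP : IsGroupPartition (univ.val.map f)) : ∃ π : V → ι, ∀ v i, v ∈ f i ↔ π v = i := by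
  classical
  have h v : ∃ i, univ.filter (v ∈ f ·) = {i} := by
    rw [← card_eq_one, card_def, filter_val, ← Multiset.countP_map f univ.val (v ∈ ·)]
    exact isGroupPartition_iff_countP_eq_one.mp hP v
  choose π hπ using h
  exact ⟨π, fun v i => by rw [eq_comm]; simpa using congrArg (i ∈ ·) (hπ v)⟩

theorem exists_equiv_map_eq {ι : Type} {f : ι → Finset V} {g : ι → Finset W}
    {πV : V → ι} {πW : W → ι} (hf : ∀ v i, v ∈ f i ↔ πV v = i) (hg : ∀ w i, w ∈ g i ↔ πW w = i)
    (hcard : ∀ i, (f i).card = (g i).card) : ∃ e : V ≃ W, ∀ i, (f i).map e.toEmbedding = g i := by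
  let e : V ≃ W := Equiv.ofFiberEquiv fun i =>
    (Equiv.subtypeEquivRight fun v => (hf v i).symm).trans <|
      ((f i).equivOfCardEq (hcard i)).trans (Equiv.subtypeEquivRight fun w => hg w i)
  have he v : πW (e v) = πV v := Equiv.ofFiberEquiv_map _ v
  refine ⟨e, fun i => Finset.ext fun w => ?_⟩
  rw [Finset.mem_map_equiv, hf, hg, ← he, e.apply_symm_apply]

theorem Multiset.Rel.exists_fin_family {α β : Type} {r : α → β → Prop} {s : Multiset α}
    {t : Multiset β} (h : Multiset.Rel r s t) :
    ∃ (n : ℕ) (f : Fin n → α) (g : Fin n → β),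
      (∀ i, r (f i) (g i)) ∧ s = univ.val.map f ∧ t = univ.val.map g := by
  induction h with
  | zero => exact ⟨0, Fin.elim0, Fin.elim0, Fin.rec0, by simp, by simp⟩
  | @cons a b _ _ hab _ ih =>
    obtain ⟨n, f, g, hfg, rfl, rfl⟩ := ih
    exact ⟨n + 1, Fin.cons a f, Fin.cons b g, Fin.cases hab hfg, by simp, by simp⟩

end Partition

theorem IsGDD.map_equiv_s9 {V W : Type} {Gs : Multiset (Finset V)} {Bs : Finset (Finset V)}
    {K : Set ℕ} (hD : IsGDD V Gs Bs K) (e : V ≃ W) :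
    IsGDD W (Gs.map (Finset.map e.toEmbedding))
      (Bs.map (Finset.mapEmbedding e.toEmbedding).toEmbedding) K where
  partition w := by
    obtain ⟨G, s, rfl, hG, hs⟩ := hD.partition (e.symm w)
    refine ⟨G.map e.toEmbedding, s.map (Finset.map e.toEmbedding), Multiset.map_cons _ _ _,
      Finset.mem_map_equiv.mpr hG, ?_⟩
    simpa [Finset.mem_map_equiv] using hs
  sizes b hb := by
    obtain ⟨B, hB, rfl⟩ := Finset.mem_map.mp hb
    simpa using hD.sizes B hB
  cross x y hxy hsep := by
    obtain ⟨x, rfl⟩ := e.surjective x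
    obtain ⟨y, rfl⟩ := e.surjective y
    have hsep' : ∀ G ∈ Gs, ¬(x ∈ G ∧ y ∈ G) := fun G hG hxyG =>
      hsep _ (Multiset.mem_map_of_mem _ hG) (by simpa [Finset.mem_map_equiv] using hxyG)
    obtain ⟨B, ⟨hB, hxB, hyB⟩, hBu⟩ := hD.cross x y (fun h => hxy (congrArg e h)) hsep'
    refine ⟨B.map e.toEmbedding, by simp [hB, hxB, hyB], ?_⟩
    rintro C ⟨hC, hxC, hyC⟩
    obtain ⟨B', hB', rfl⟩ := Finset.mem_map.mp hC
    simp only [RelEmbedding.coe_toEmbedding, Finset.mapEmbedding_apply, Finset.mem_map_equiv,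
      Equiv.symm_apply_apply] at hxC hyC ⊢
    rw [hBu B' ⟨hB', hxC, hyC⟩]
  within G' hG' x hx y hy hxy b hb hxyb := by
    obtain ⟨G, hGmem, rfl⟩ := Multiset.mem_map.mp hG'
    obtain ⟨B, hB, rfl⟩ := Finset.mem_map.mp hb
    simp only [RelEmbedding.coe_toEmbedding, Finset.mapEmbedding_apply, Finset.mem_map_equiv]
      at hx hy hxyb
    exact hD.within G hGmem _ hx _ hy (e.symm.injective.ne hxy) B hB hxyb

theorem GDDExists.exists_isGDD {K : Set ℕ} {T : Multiset ℕ} (hT : GDDExists K T) {V : Type}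
    {P : Multiset (Finset V)} (hP : IsGroupPartition P) (hPT : P.map Finset.card = T) :
    ∃ Bs, IsGDD V P Bs K := by
  obtain ⟨W, _, Q, B, hQ, hQT⟩ := hT
  -- index the groups of both designs by a common `Fin n`, pairing groups of equal size
  have hrel : Multiset.Rel (fun G H => G.card = H.card) P Q := by
    rw [← Multiset.rel_map, Multiset.rel_eq, hPT, hQT]
  obtain ⟨n, f, g, hfg, rfl, rfl⟩ := hrel.exists_fin_family
  obtain ⟨πV, hπV⟩ := hP.exists_proj
  obtain ⟨πW, hπW⟩ := IsGroupPartition.exists_proj hQ.partition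
  obtain ⟨e, he⟩ := exists_equiv_map_eq hπW hπV fun i => (hfg i).symm
  have hgf : (univ.val.map g).map (Finset.map e.toEmbedding) = univ.val.map f := by
    rw [Multiset.map_map]
    exact congrArg (Multiset.map · univ.val) (funext he)
  exact ⟨_, hgf ▸ hQ.map_equiv_s9 e⟩

section Inflation

variable {V : Type} {w : V → ℕ}

variable (w) in
def inflate (G : Finset V) : Finset (Σ v, Fin (w v)) :=
  G.sigma fun _ => univ

@[simp]
theorem mem_inflate {G : Finset V} {x : Σ v, Fin (w v)} : x ∈ inflate w G ↔ x.1 ∈ G := by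
  simp [inflate]

theorem card_inflate (G : Finset V) : (inflate w G).card = ∑ v ∈ G, w v := by
  simp [inflate]

theorem IsGroupPartition.map_inflate {P : Multiset (Finset V)} (hP : IsGroupPartition P) :
    IsGroupPartition (P.map (inflate w)) := by
  classical
  rw [isGroupPartition_iff_countP_eq_one] at hP ⊢
  intro x
  rw [Multiset.countP_map, ← hP x.1, Multiset.countP_eq_card_filter]
  simp only [mem_inflate]

theorem isGroupPartition_univ_map_singleton (ι : Type) [Fintype ι] :
    IsGroupPartition ((univ : Finset ι).val.map singleton) := by
  classical
  rw [isGroupPartition_iff_countP_eq_one]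
  intro i
  simp [Multiset.countP_map, Multiset.filter_eq]

variable (w) in
def blockGroups (b : Finset V) : Multiset (Finset (Σ v : b, Fin (w v))) :=
  (univ.val.map singleton).map (inflate fun v : b => w v)

theorem map_card_blockGroups (b : Finset V) : (blockGroups w b).map card = b.val.map w := by
  simp only [blockGroups, Multiset.map_map, Function.comp_def, card_inflate, sum_singleton,
    univ_eq_attach, attach_val]
  exact Multiset.attach_map_val' _ _

theorem mem_blockGroups {b : Finset V} {L : Finset (Σ v : b, Fin (w v))} :
    L ∈ blockGroups w b ↔ ∃ v, inflate (fun v : b => w v) {v} = L := by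
  simp only [blockGroups, Multiset.map_map, Multiset.mem_map, Function.comp_apply, mem_val,
    mem_univ, true_and]

variable (w) in
def inflateEmb (b : Finset V) : (Σ v : b, Fin (w v)) ↪ Σ v, Fin (w v) :=
  .sigmaMap (.subtype _) fun _ => .refl _

theorem mem_map_inflateEmb {b : Finset V} {B : Finset (Σ v : b, Fin (w v))}
    {x : Σ v, Fin (w v)} :
    x ∈ B.map (inflateEmb w b) ↔ ∃ hx : x.1 ∈ b, ⟨⟨x.1, hx⟩, x.2⟩ ∈ B := by
  constructor
  · intro hx
    obtain ⟨y, hy, rfl⟩ := Finset.mem_map.mp hx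
    exact ⟨y.1.2, hy⟩
  · rintro ⟨hx, hB⟩
    exact Finset.mem_map.mpr ⟨_, hB, rfl⟩

variable [DecidableEq V] {Bs : Finset (Finset V)}

variable (w) in
def gluedBlocks (C : ∀ b ∈ Bs, Finset (Finset (Σ v : b, Fin (w v)))) :
    Finset (Finset (Σ v, Fin (w v))) :=
  Bs.attach.biUnion fun b => (C b.1 b.2).image (Finset.map (inflateEmb w b))

variable {C : ∀ b ∈ Bs, Finset (Finset (Σ v : b, Fin (w v)))}

theorem mem_gluedBlocks {X : Finset (Σ v, Fin (w v))} :
    X ∈ gluedBlocks w C ↔ ∃ b hb, ∃ B ∈ C b hb, B.map (inflateEmb w b) = X := by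
  simp [gluedBlocks]

variable {Gs : Multiset (Finset V)} {K K' : Set ℕ}

theorem IsGDD.weighting (hD : IsGDD V Gs Bs K')
    (hC : ∀ b (hb : b ∈ Bs), IsGDD (Σ v : b, Fin (w v)) (blockGroups w b) (C b hb) K) :
    IsGDD (Σ v, Fin (w v)) (Gs.map (inflate w)) (gluedBlocks w C) K where
  partition := IsGroupPartition.map_inflate hD.partition
  sizes X hX := by
    obtain ⟨b, hb, B, hB, rfl⟩ := mem_gluedBlocks.mp hX
    rw [card_map]
    exact (hC b hb).sizes B hB
  cross x y hxy hsep := by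
    have hsep' : ∀ G ∈ Gs, ¬(x.1 ∈ G ∧ y.1 ∈ G) := fun G hG hxyG =>
      hsep _ (Multiset.mem_map_of_mem _ hG) (by simpa using hxyG)
    have hne : x.1 ≠ y.1 := by
      intro h
      obtain ⟨G, s, hGs, hxG, -⟩ := hD.partition x.1
      exact hsep' G (hGs ▸ Multiset.mem_cons_self _ _) ⟨hxG, h ▸ hxG⟩
    obtain ⟨b, ⟨hb, hxb, hyb⟩, hbu⟩ := hD.cross _ _ hne hsep'
    have hsep_b : ∀ L ∈ blockGroups w b, ¬((⟨⟨x.1, hxb⟩, x.2⟩ : Σ v : b, Fin (w v)) ∈ L ∧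
        (⟨⟨y.1, hyb⟩, y.2⟩ : Σ v : b, Fin (w v)) ∈ L) := by
      rintro L hL ⟨hxL, hyL⟩
      obtain ⟨v, rfl⟩ := mem_blockGroups.mp hL
      simp only [mem_inflate, mem_singleton] at hxL hyL
      exact hne (congrArg Subtype.val (hxL.trans hyL.symm))
    obtain ⟨B, ⟨hB, hxB, hyB⟩, hBu⟩ := (hC b hb).cross ⟨⟨x.1, hxb⟩, x.2⟩ ⟨⟨y.1, hyb⟩, y.2⟩
      (fun h => hne (congrArg (fun z => z.1.1) h)) hsep_b
    refine ⟨B.map (inflateEmb w b), ⟨mem_gluedBlocks.mpr ⟨b, hb, B, hB, rfl⟩,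
      mem_map_inflateEmb.mpr ⟨hxb, hxB⟩, mem_map_inflateEmb.mpr ⟨hyb, hyB⟩⟩, ?_⟩
    rintro X ⟨hX, hxX, hyX⟩
    obtain ⟨b', hb', B', hB', rfl⟩ := mem_gluedBlocks.mp hX
    obtain ⟨hxb', hxB'⟩ := mem_map_inflateEmb.mp hxX
    obtain ⟨hyb', hyB'⟩ := mem_map_inflateEmb.mp hyX
    obtain rfl := hbu b' ⟨hb', hxb', hyb'⟩
    rw [hBu B' ⟨hB', hxB', hyB'⟩]
  within G' hG' x hx y hy hxy X hX hxyX := by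
    obtain ⟨G, hG, rfl⟩ := Multiset.mem_map.mp hG'
    obtain ⟨b, hb, B, hB, rfl⟩ := mem_gluedBlocks.mp hX
    obtain ⟨hxb, hxB⟩ := mem_map_inflateEmb.mp hxyX.1
    obtain ⟨hyb, hyB⟩ := mem_map_inflateEmb.mp hxyX.2
    by_cases h : x.1 = y.1
    · refine (hC b hb).within (inflate _ {⟨x.1, hxb⟩}) (mem_blockGroups.mpr ⟨_, rfl⟩)
        _ (by simp) _ (by simp [h]) (fun h' => hxy ?_) B hB ⟨hxB, hyB⟩
      exact congrArg (inflateEmb w b) h'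
    · exact hD.within G hG _ (mem_inflate.mp hx) _ (mem_inflate.mp hy) h b hb ⟨hxb, hyb⟩

theorem IsGDD.gddExists_weighting [Fintype V] (hD : IsGDD V Gs Bs K')
    (hfill : ∀ b ∈ Bs, GDDExists K (b.val.map w)) :
    GDDExists K (Gs.map fun G => ∑ v ∈ G, w v) := by
  choose C hC using fun b hb => (hfill b hb).exists_isGDD
    ((isGroupPartition_univ_map_singleton b).map_inflate) (map_card_blockGroups b)
  refine ⟨_, inferInstance, _, _, hD.weighting hC, ?_⟩
  simp only [Multiset.map_map, Function.comp_def, card_inflate]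

end Inflation

theorem Finset.exists_forall_le_sum_eq {ι : Type} [DecidableEq ι] (s : Finset ι) {T t : ℕ}
    (ht : t ≤ s.card * T) : ∃ a : ι → ℕ, (∀ i, a i ≤ T) ∧ ∑ i ∈ s, a i = t := by
  induction s using Finset.induction_on generalizing t with
  | empty => exact ⟨0, fun _ => Nat.zero_le _, by simp_all⟩
  | @insert j s hj ih =>
    rw [card_insert_of_notMem hj, Nat.succ_mul] at ht
    obtain ⟨a, haT, hsum⟩ := ih (t := t - min t T) (by omega)
    refine ⟨Function.update a j (min t T), fun i => ?_, ?_⟩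
    · rcases eq_or_ne i j with rfl | hij
      · simp
      · simpa [hij] using haT i
    · rw [sum_insert hj, Function.update_self,
        sum_congr rfl fun i hi => Function.update_of_ne (ne_of_mem_of_not_mem hi hj) _ _, hsum]
      omega

theorem Finset.map_val_eq_replicate_add_singleton {α β : Type} {s : Finset α} {a : α}
    (ha : a ∈ s) {f : α → β} {c : β} (hf : ∀ x ∈ s, x ≠ a → f x = c) :
    s.val.map f = Multiset.replicate (s.card - 1) c + {f a} := by
  classical
  rw [← insert_erase ha, insert_val_of_notMem (notMem_erase a s), Multiset.map_cons,
    card_insert_of_notMem (notMem_erase a s), Nat.add_sub_cancel, add_comm,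
    Multiset.singleton_add]
  congr
  refine Multiset.eq_replicate.mpr ⟨by rw [Multiset.card_map]; rfl, fun y hy => ?_⟩
  obtain ⟨x, hx, rfl⟩ := Multiset.mem_map.mp hy
  exact hf x (mem_of_mem_erase hx) (ne_of_mem_erase hx)

section Transversal

variable {V : Type} {Gs : Multiset (Finset V)} {Bs : Finset (Finset V)} {K : Set ℕ}

theorem IsGDD.eq_of_mem_block_of_mem_group (hD : IsGDD V Gs Bs K) {b G : Finset V}
    (hb : b ∈ Bs) (hG : G ∈ Gs) {x y : V} (hxb : x ∈ b) (hyb : y ∈ b) (hxG : x ∈ G)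
    (hyG : y ∈ G) : x = y := by
  by_contra hxy
  exact hD.within G hG x hxG y hyG hxy b hb ⟨hxb, hyb⟩

theorem IsGDD.exists_mem_block_inter_group (hD : IsGDD V Gs Bs K) {b G : Finset V}
    (hb : b ∈ Bs) (hcard : Multiset.card Gs ≤ b.card) (hG : G ∈ Gs) : ∃ v ∈ b, v ∈ G := by
  classical
  by_contra! hbG
  have hgroup v : ∃ G ∈ Gs, v ∈ G := by
    obtain ⟨G, s, rfl, hv, -⟩ := hD.partition v
    exact ⟨G, Multiset.mem_cons_self _ _, hv⟩
  choose group hgroup_mem hmem_group using hgroup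
  have hmaps : Set.MapsTo group b ((Gs.toFinset.erase G : Finset _)) := fun v hv =>
    mem_erase.mpr ⟨fun h => hbG v hv (h ▸ hmem_group v), Multiset.mem_toFinset.mpr (hgroup_mem v)⟩
  have hinj : Set.InjOn group b := fun v hv v' hv' h =>
    hD.eq_of_mem_block_of_mem_group hb (hgroup_mem v) hv hv' (hmem_group v) (h ▸ hmem_group v')
  have := card_le_card_of_injOn group hmaps hinj
  rw [card_erase_of_mem (Multiset.mem_toFinset.mpr hG)] at this
  have := Multiset.toFinset_card_le Gs
  have := Multiset.card_pos_iff_exists_mem.mpr ⟨G, hG⟩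
  omega

theorem IsGDD.exists_map_val_eq_replicate_add_singleton (hD : IsGDD V Gs Bs K) {b G : Finset V}
    (hb : b ∈ Bs) (hcard : Multiset.card Gs ≤ b.card) (hG : G ∈ Gs) {β : Type} {f : V → β}
    {c : β} (hf : ∀ v ∉ G, f v = c) :
    ∃ v ∈ G, b.val.map f = Multiset.replicate (b.card - 1) c + {f v} := by
  obtain ⟨v, hvb, hvG⟩ := hD.exists_mem_block_inter_group hb hcard hG
  refine ⟨v, hvG, Finset.map_val_eq_replicate_add_singleton hvb fun x hxb hxv => hf x fun hxG => ?_⟩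
  exact hxv (hD.eq_of_mem_block_of_mem_group hb hG hxb hvb hxG hvG)

end Transversal

/-- `h(u - 1)/2 = d + 3T` is the largest element of `D`. -/
theorem exists_mul_sub_one_eq_two_mul_add_six_mul {h u d : ℕ} (hh6 : h % 6 = 2 ∨ h % 6 = 4)
    (hu3 : u % 3 = 0) (hu : 3 ≤ u) (hd : d % 3 = h % 3) (hdh : d ≤ h) :
    ∃ T, h * (u - 1) = 2 * d + 6 * T := by
  obtain ⟨j, rfl⟩ : ∃ j, h = 2 * j := ⟨h / 2, by omega⟩
  obtain ⟨k, rfl⟩ : ∃ k, u = 3 * k + 3 := ⟨u / 3 - 1, by omega⟩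
  refine ⟨j * k + (2 * j - d) / 3, ?_⟩
  have : 2 * j * (3 * k + 3 - 1) = 6 * (j * k) + 4 * j := by
    rw [show 3 * k + 3 - 1 = 3 * k + 2 by omega]
    ring
  omega

theorem exists_le_mul_eq_mul_add_three_mul {h q d m T : ℕ} (hd : d % 3 = h % 3)
    (hm3 : m % 3 = h * q % 3) (hml : q * d ≤ m) (hmu : 2 * m ≤ q * (2 * d + 6 * T)) :
    ∃ t ≤ q * T, m = q * d + 3 * t := by
  have hmod : m % 3 = q * d % 3 := by rw [hm3, Nat.mul_mod, ← hd, ← Nat.mul_mod, mul_comm]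
  have hmu' : 2 * m ≤ 2 * (q * d) + 6 * (q * T) := by linarith
  exact ⟨(m - q * d) / 3, by omega, by omega⟩

theorem stmt_9_general (h u q dmin : ℕ)
    (hh6 : h % 6 = 2 ∨ h % 6 = 4) (hu3 : u % 3 = 0) (hu : 6 ≤ u)
    (hdmin : 1 ≤ dmin ∧ dmin % 3 = h % 3 ∧
      ∀ d : ℕ, 1 ≤ d → d % 3 = h % 3 → dmin ≤ d)
    (hmaster : GDDExists {u + 1} (Multiset.replicate (u + 1) q))
    (hfill : ∀ d : ℕ, d % 3 = h % 3 → dmin ≤ d → 2 * d ≤ h * (u - 1) →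
      GDDExists {4} (Multiset.replicate u h + {d}))
    (m : ℕ) (hm3 : m % 3 = (h * q) % 3) (hml : q * dmin ≤ m)
    (hmu : 2 * m ≤ q * h * (u - 1)) :
    GDDExists {4} (Multiset.replicate u (h * q) + {m}) := by
  classical
  obtain ⟨-, hdmin3, hdmin_le⟩ := hdmin
  obtain ⟨T, hT⟩ := exists_mul_sub_one_eq_two_mul_add_six_mul hh6 hu3 (by omega) hdmin3
    (hdmin_le h (by omega) rfl)
  obtain ⟨t, ht, rfl⟩ := exists_le_mul_eq_mul_add_three_mul hdmin3 hm3 hml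
    (by rwa [mul_assoc, hT] at hmu)
  obtain ⟨V, _, Gs, Bs, hD, hGs⟩ := hmaster
  have hGcard : ∀ G ∈ Gs, G.card = q := fun G hG =>
    Multiset.eq_of_mem_replicate (hGs ▸ Multiset.mem_map_of_mem _ hG)
  have hGs_card : Multiset.card Gs = u + 1 := by simpa using congrArg Multiset.card hGs
  obtain ⟨G₀, hG₀⟩ := Multiset.card_pos_iff_exists_mem.mp (by omega : 0 < Multiset.card Gs)
  obtain ⟨a, haT, hasum⟩ := G₀.exists_forall_le_sum_eq (t := t) (by rwa [hGcard G₀ hG₀])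
  let w : V → ℕ := fun v => if v ∈ G₀ then dmin + 3 * a v else h
  have hw : ∀ v ∉ G₀, w v = h := fun v hv => if_neg hv
  have hblocks : ∀ b ∈ Bs, GDDExists {4} (b.val.map w) := by
    intro b hb
    have hb_card : b.card = u + 1 := hD.sizes b hb
    obtain ⟨v, hv, hbw⟩ :=
      hD.exists_map_val_eq_replicate_add_singleton hb (hGs_card.trans hb_card.symm).le hG₀ hw
    rw [hbw, hb_card, Nat.add_sub_cancel]
    have := haT v
    exact hfill _ (by simp [w, hv]; omega) (by simp [w, hv]) (by simp [w, hv]; omega)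
  have hG₀_sum : ∑ v ∈ G₀, w v = q * dmin + 3 * t := by
    rw [sum_congr rfl fun v hv => if_pos hv, sum_add_distrib, sum_const, hGcard G₀ hG₀,
      smul_eq_mul, ← mul_sum, hasum]
  obtain ⟨rest, rfl⟩ := Multiset.exists_cons_of_mem hG₀
  have hrest : Multiset.card rest = u := by simpa using hGs_card
  have := hD.gddExists_weighting hblocks
  rwa [IsGroupPartition.map_sum_eq_replicate_add_singleton hD.partition
    (fun G hG => hGcard G (Multiset.mem_cons_of_mem hG)) hw, hrest, hG₀_sum] at this

/-- Let h ≡ 2 or 4 (mod 6), u ≡ 0 (mod 3) with u ≥ 6, and 3 ∤ q.  Suppose there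
is a (u+1)-GDD of type q^(u+1) and, with d_min the least positive integer
congruent to h mod 3, a 4-GDD of type h^u d^1 for every admissible d (i.e.
d ≡ h (mod 3) and d_min ≤ d ≤ h(u−1)/2).  Then for every m ≡ h·q (mod 3) with
q·d_min ≤ m ≤ q·h·(u−1)/2 there is a 4-GDD of type (h·q)^u m^1. -/
theorem stmt_9 (h u q dmin : ℕ)
    (hh6 : h % 6 = 2 ∨ h % 6 = 4) (hu3 : u % 3 = 0) (hu : 6 ≤ u)
    (hq : 1 ≤ q) (hq3 : ¬ (3 ∣ q))
    (hdmin : 1 ≤ dmin ∧ dmin % 3 = h % 3 ∧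
      ∀ d : ℕ, 1 ≤ d → d % 3 = h % 3 → dmin ≤ d)
    (hmaster : GDDExists {u + 1} (Multiset.replicate (u + 1) q))
    (hfill : ∀ d : ℕ, d % 3 = h % 3 → dmin ≤ d → 2 * d ≤ h * (u - 1) →
      GDDExists {4} (Multiset.replicate u h + {d}))
    (m : ℕ) (hm3 : m % 3 = (h * q) % 3) (hml : q * dmin ≤ m)
    (hmu : 2 * m ≤ q * h * (u - 1)) :
    GDDExists {4} (Multiset.replicate u (h * q) + {m}) :=
  stmt_9_general h u q dmin hh6 hu3 hu hdmin hmaster hfill m hm3 hml hmu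
end

section
/- Suppose g ≡ 2 or 4 (mod 6), and suppose that: (a) there exists a 4-GDD of type g^6 d^1 for every d with 0 ≤ d < g and d ≡ g (mod 3); and (b) there exists a 4-GDD of type g^15 w^1 for every w with w ≡ g (mod 3) and 0 ≤ w ≤ 7g. Then there exists a 4-GDD of type g^21 m^1 for every m with m ≡ g (mod 3) and 0 ≤ m < g. -/
/-- The group sizes of a partition of a finite type sum to the cardinality. -/
lemma gdd_card_sum {V : Type} [Fintype V] {Gs : Multiset (Finset V)}
    (h : ∀ v : V, ∃ G s, Gs = G ::ₘ s ∧ v ∈ G ∧ ∀ G' ∈ s, v ∉ G') :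
    (Gs.map Finset.card).sum = Fintype.card V := by
  classical
  have hM : (Gs.map Finset.val).sum = (Finset.univ : Finset V).val := by
    refine Multiset.ext.mpr fun v => ?_
    obtain ⟨G, s, hGs, hvG, hvs⟩ := h v
    have h1 : Multiset.count v (Multiset.map Finset.val (G ::ₘ s)).sum = 1 := by
      rw [Multiset.map_cons, Multiset.sum_cons, Multiset.count_add,
        Multiset.count_eq_one_of_mem G.nodup hvG,
        Multiset.count_eq_zero.mpr, add_zero]
      intro hmem
      have hmem' : ∃ t ∈ Multiset.map Finset.val s, v ∈ t := by
        have : ∀ S : Multiset (Multiset V), v ∈ S.sum → ∃ t ∈ S, v ∈ t := by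
          intro S
          induction S using Multiset.induction with
          | empty => simp
          | cons a S ih =>
            intro hv
            rw [Multiset.sum_cons, Multiset.mem_add] at hv
            rcases hv with h | h
            · exact ⟨a, Multiset.mem_cons_self a S, h⟩
            · obtain ⟨t, ht, hvt⟩ := ih h
              exact ⟨t, Multiset.mem_cons_of_mem ht, hvt⟩
        exact this _ hmem
      obtain ⟨t, ht, hvt⟩ := hmem'
      obtain ⟨G', hG', rfl⟩ := Multiset.mem_map.mp ht
      exact hvs G' hG' hvt
    rw [hGs, h1]
    have : v ∈ (Finset.univ : Finset V) := Finset.mem_univ v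
    exact (Multiset.count_eq_one_of_mem Finset.univ.nodup this).symm
  have hcard : (Gs.map Finset.val).sum.card = Fintype.card V := by
    rw [hM]; rfl
  have h2 : ∀ s : Multiset (Finset V),
      (s.map Finset.val).sum.card = (s.map Finset.card).sum := by
    intro s
    induction s using Multiset.induction with
    | empty => simp
    | cons a s ih => simp [ih]
  rw [← h2, hcard]

/-- Filling-in-a-group construction: a GDD with a distinguished group of size
`S.sum` together with a GDD of type `S` yield a GDD of type `T + S`. -/
lemma gdd_fill (K : Set ℕ) (T S : Multiset ℕ)
    (hT : GDDExists K (T + {S.sum})) (hS : GDDExists K S) :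
    GDDExists K (T + S) := by
  classical
  obtain ⟨V, _, GsB, BsB, hB, htB⟩ := hT
  obtain ⟨W, _, GsS, BsS, hSg, htS⟩ := hS
  -- find the distinguished group G
  have hmem : S.sum ∈ GsB.map Finset.card := by rw [htB]; simp
  obtain ⟨G, hG, hGcard⟩ := Multiset.mem_map.mp hmem
  have herase : (GsB.erase G).map Finset.card = T := by
    have h1 : GsB = G ::ₘ GsB.erase G := (Multiset.cons_erase hG).symm
    have h3 : Finset.card G ::ₘ (GsB.erase G).map Finset.card = T + {S.sum} := by
      rw [← Multiset.map_cons, ← h1, htB]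
    rw [hGcard, add_comm, Multiset.singleton_add] at h3
    exact (Multiset.cons_inj_right _).mp h3
  -- every point of G lies in no group of GsB.erase G, and conversely
  have huniqG : ∀ v ∈ G, ∀ G' ∈ GsB.erase G, v ∉ G' := by
    intro v hv G' hG' hv'
    obtain ⟨G₀, sB, hEq, hv0, hvs⟩ := hB.partition v
    have hGeq : G = G₀ := by
      have := hG
      rw [hEq, Multiset.mem_cons] at this
      rcases this with h | h
      · exact h
      · exact absurd hv (hvs G h)
    have : GsB.erase G = sB := by rw [hEq, ← hGeq, Multiset.erase_cons_head]
    exact hvs G' (this ▸ hG') hv'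
  -- the bijection between W and G
  have hcardW : Fintype.card W = Fintype.card {x // x ∈ G} := by
    rw [Fintype.card_coe, hGcard, ← htS, gdd_card_sum hSg.partition]
  let e : W ≃ {x // x ∈ G} := Fintype.equivOfCardEq hcardW
  let f : W → V := fun w => ((e w : {x // x ∈ G}) : V)
  have hf_inj : Function.Injective f := by
    intro a b hab
    exact e.injective (Subtype.ext hab)
  have hf_mem : ∀ w, f w ∈ G := fun w => (e w).2
  have himg_sub : ∀ A : Finset W, Finset.image f A ⊆ G := by
    intro A x hx
    obtain ⟨w, _, rfl⟩ := Finset.mem_image.mp hx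
    exact hf_mem w
  have hf_surj : ∀ v (hv : v ∈ G), f (e.symm ⟨v, hv⟩) = v := by
    intro v hv; simp [f]
  -- the new groups and blocks
  refine ⟨V, inferInstance, GsS.map (Finset.image f) + GsB.erase G,
    BsB ∪ BsS.image (Finset.image f), ⟨?_, ?_, ?_, ?_⟩, ?_⟩
  · -- partition
    intro v
    by_cases hv : v ∈ G
    · obtain ⟨Gw, sW, hEqW, hw0, hws⟩ := hSg.partition (e.symm ⟨v, hv⟩)
      refine ⟨Finset.image f Gw, sW.map (Finset.image f) + GsB.erase G, ?_, ?_, ?_⟩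
      · rw [hEqW, Multiset.map_cons, Multiset.cons_add]
      · refine Finset.mem_image.mpr ⟨_, hw0, hf_surj v hv⟩
      · intro G' hG' hvG'
        rw [Multiset.mem_add] at hG'
        rcases hG' with h | h
        · obtain ⟨A, hA, rfl⟩ := Multiset.mem_map.mp h
          obtain ⟨w, hw, hfw⟩ := Finset.mem_image.mp hvG'
          have : w = e.symm ⟨v, hv⟩ := hf_inj (by rw [hfw, hf_surj v hv])
          exact hws A hA (this ▸ hw)
        · exact huniqG v hv G' h hvG'
    · obtain ⟨G₀, sB, hEq, hv0, hvs⟩ := hB.partition v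
      have hne : G₀ ≠ G := fun h => hv (h ▸ hv0)
      have herase2 : GsB.erase G = G₀ ::ₘ sB.erase G := by
        rw [hEq, Multiset.erase_cons_tail _ hne]
      refine ⟨G₀, GsS.map (Finset.image f) + sB.erase G, ?_, hv0, ?_⟩
      · rw [herase2, Multiset.add_cons]
      · intro G' hG' hvG'
        rw [Multiset.mem_add] at hG'
        rcases hG' with h | h
        · obtain ⟨A, hA, rfl⟩ := Multiset.mem_map.mp h
          exact hv (himg_sub A hvG')
        · exact hvs G' (Multiset.mem_of_mem_erase h) hvG'
  · -- sizes
    intro b hb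
    rw [Finset.mem_union] at hb
    rcases hb with h | h
    · exact hB.sizes b h
    · obtain ⟨b', hb', rfl⟩ := Finset.mem_image.mp h
      rw [Finset.card_image_of_injective _ hf_inj]
      exact hSg.sizes b' hb'
  · -- cross
    intro x y hxy hsep
    have hsepB : ∀ G' ∈ GsB.erase G, ¬(x ∈ G' ∧ y ∈ G') := by
      intro G' hG'
      exact hsep G' (Multiset.mem_add.mpr (Or.inr hG'))
    by_cases hx : x ∈ G
    · by_cases hy : y ∈ G
      · -- both in G: use the small GDD
        set wx := e.symm ⟨x, hx⟩ with hwx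
        set wy := e.symm ⟨y, hy⟩ with hwy
        have hfx : f wx = x := hf_surj x hx
        have hfy : f wy = y := hf_surj y hy
        have hwxy : wx ≠ wy := fun h => hxy (by rw [← hfx, ← hfy, h])
        have hsepS : ∀ A ∈ GsS, ¬(wx ∈ A ∧ wy ∈ A) := by
          intro A hA ⟨h1, h2⟩
          exact hsep (Finset.image f A)
            (Multiset.mem_add.mpr (Or.inl (Multiset.mem_map_of_mem _ hA)))
            ⟨hfx ▸ Finset.mem_image_of_mem f h1, hfy ▸ Finset.mem_image_of_mem f h2⟩
        obtain ⟨b, ⟨hbS, hxb, hyb⟩, hbu⟩ := hSg.cross wx wy hwxy hsepS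
        refine ⟨Finset.image f b, ⟨Finset.mem_union_right _
          (Finset.mem_image_of_mem _ hbS),
          hfx ▸ Finset.mem_image_of_mem f hxb, hfy ▸ Finset.mem_image_of_mem f hyb⟩, ?_⟩
        rintro b' ⟨hb', hxb', hyb'⟩
        rw [Finset.mem_union] at hb'
        rcases hb' with h | h
        · exact absurd ⟨hxb', hyb'⟩ (hB.within G hG x hx y hy hxy b' h)
        · obtain ⟨b'', hb'', rfl⟩ := Finset.mem_image.mp h
          congr 1
          obtain ⟨w1, hw1, hfw1⟩ := Finset.mem_image.mp hxb'
          obtain ⟨w2, hw2, hfw2⟩ := Finset.mem_image.mp hyb'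
          have e1 : w1 = wx := hf_inj (by rw [hfw1, hfx])
          have e2 : w2 = wy := hf_inj (by rw [hfw2, hfy])
          exact hbu b'' ⟨hb'', e1 ▸ hw1, e2 ▸ hw2⟩
      · -- y ∉ G: use the big GDD
        have hsepBig : ∀ G' ∈ GsB, ¬(x ∈ G' ∧ y ∈ G') := by
          intro G' hG' ⟨h1, h2⟩
          by_cases hGG : G' = G
          · exact hy (hGG ▸ h2)
          · exact hsepB G' ((Multiset.mem_erase_of_ne hGG).mpr hG') ⟨h1, h2⟩
        obtain ⟨b, ⟨hbB, hxb, hyb⟩, hbu⟩ := hB.cross x y hxy hsepBig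
        refine ⟨b, ⟨Finset.mem_union_left _ hbB, hxb, hyb⟩, ?_⟩
        rintro b' ⟨hb', hxb', hyb'⟩
        rw [Finset.mem_union] at hb'
        rcases hb' with h | h
        · exact hbu b' ⟨h, hxb', hyb'⟩
        · obtain ⟨b'', hb'', rfl⟩ := Finset.mem_image.mp h
          exact absurd (himg_sub b'' hyb') hy
    · -- x ∉ G: use the big GDD
      have hsepBig : ∀ G' ∈ GsB, ¬(x ∈ G' ∧ y ∈ G') := by
        intro G' hG' ⟨h1, h2⟩
        by_cases hGG : G' = G
        · exact hx (hGG ▸ h1)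
        · exact hsepB G' ((Multiset.mem_erase_of_ne hGG).mpr hG') ⟨h1, h2⟩
      obtain ⟨b, ⟨hbB, hxb, hyb⟩, hbu⟩ := hB.cross x y hxy hsepBig
      refine ⟨b, ⟨Finset.mem_union_left _ hbB, hxb, hyb⟩, ?_⟩
      rintro b' ⟨hb', hxb', hyb'⟩
      rw [Finset.mem_union] at hb'
      rcases hb' with h | h
      · exact hbu b' ⟨h, hxb', hyb'⟩
      · obtain ⟨b'', hb'', rfl⟩ := Finset.mem_image.mp h
        exact absurd (himg_sub b'' hxb') hx
  · -- within
    intro G' hG' x hx y hy hxy b hb ⟨hxb, hyb⟩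
    rw [Multiset.mem_add] at hG'
    rw [Finset.mem_union] at hb
    rcases hG' with hgs | hgb
    · obtain ⟨A, hA, rfl⟩ := Multiset.mem_map.mp hgs
      have hxG : x ∈ G := himg_sub A hx
      have hyG : y ∈ G := himg_sub A hy
      rcases hb with h | h
      · exact hB.within G hG x hxG y hyG hxy b h ⟨hxb, hyb⟩
      · obtain ⟨b'', hb'', rfl⟩ := Finset.mem_image.mp h
        obtain ⟨w1, hw1, hfw1⟩ := Finset.mem_image.mp hx
        obtain ⟨w2, hw2, hfw2⟩ := Finset.mem_image.mp hy
        obtain ⟨u1, hu1, hfu1⟩ := Finset.mem_image.mp hxb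
        obtain ⟨u2, hu2, hfu2⟩ := Finset.mem_image.mp hyb
        have e1 : u1 = w1 := hf_inj (by rw [hfu1, hfw1])
        have e2 : u2 = w2 := hf_inj (by rw [hfu2, hfw2])
        have hw12 : w1 ≠ w2 := fun h => hxy (by rw [← hfw1, ← hfw2, h])
        exact hSg.within A hA w1 hw1 w2 hw2 hw12 b'' hb''
          ⟨e1 ▸ hu1, e2 ▸ hu2⟩
    · rcases hb with h | h
      · exact hB.within G' (Multiset.mem_of_mem_erase hgb) x hx y hy hxy b h ⟨hxb, hyb⟩
      · obtain ⟨b'', hb'', rfl⟩ := Finset.mem_image.mp h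
        exact huniqG x (himg_sub b'' hxb) G' hgb hx
  · -- group type
    rw [Multiset.map_add, herase, Multiset.map_map]
    have : (fun A : Finset W => (Finset.image f A).card) = Finset.card := by
      funext A
      exact Finset.card_image_of_injective _ hf_inj
    rw [Function.comp_def]
    simp only [Finset.card_image_of_injective _ hf_inj]
    rw [htS, add_comm]

/-- If g ≡ 2 or 4 (mod 6), 4-GDDs of type g^6 d^1 exist for all admissible
d < g, and 4-GDDs of type g^15 w^1 exist for all admissible w ≤ 7g, then
4-GDDs of type g^21 m^1 exist for all admissible m < g. -/
theorem stmt_12 (g : ℕ) (h6 : g % 6 = 2 ∨ g % 6 = 4)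
    (ha : ∀ d : ℕ, d < g → d % 3 = g % 3 →
      GDDExists {4} (Multiset.replicate 6 g + {d}))
    (hb : ∀ w : ℕ, w % 3 = g % 3 → w ≤ 7 * g →
      GDDExists {4} (Multiset.replicate 15 g + {w}))
    (m : ℕ) (hm3 : m % 3 = g % 3) (hmg : m < g) :
    GDDExists {4} (Multiset.replicate 21 g + {m}) := by
  have hsum : (Multiset.replicate 6 g + ({m} : Multiset ℕ)).sum = 6 * g + m := by
    rw [Multiset.sum_add, Multiset.sum_replicate, Multiset.sum_singleton, smul_eq_mul]
  have hw3 : (6 * g + m) % 3 = g % 3 := by omega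
  have hw7 : 6 * g + m ≤ 7 * g := by omega
  have hbig := hb (6 * g + m) hw3 hw7
  rw [← hsum] at hbig
  have := gdd_fill {4} (Multiset.replicate 15 g) (Multiset.replicate 6 g + {m})
    hbig (ha m hmg hm3)
  have heq : Multiset.replicate 15 g + (Multiset.replicate 6 g + ({m} : Multiset ℕ))
      = Multiset.replicate 21 g + {m} := by
    rw [← add_assoc, ← Multiset.replicate_add]
  rwa [heq] at this
end

section
/- Suppose there exists a 4-DGDD of type (g, (g/4)^4)^u (with 4 | g), and for some m ≥ 0 there exists a 4-GDD of type (g/4)^u m^1. Then there exists a 4-GDD of type g^u m^1. -/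
/-- A double group divisible design: `Gs` are the groups and `Hs` the holes, both
partitions of `V`; every pair of points neither in a common group nor in a common
hole lies in exactly one block, and all other pairs lie in no block. -/
structure IsDGDD (V : Type) (Gs Hs : Multiset (Finset V)) (Bs : Finset (Finset V))
    (K : Set ℕ) : Prop where
  gpartition : ∀ v : V, ∃ G s, Gs = G ::ₘ s ∧ v ∈ G ∧ ∀ G' ∈ s, v ∉ G'
  hpartition : ∀ v : V, ∃ H s, Hs = H ::ₘ s ∧ v ∈ H ∧ ∀ H' ∈ s, v ∉ H'
  sizes : ∀ b ∈ Bs, b.card ∈ K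
  cross : ∀ x y : V, x ≠ y → (∀ G ∈ Gs, ¬(x ∈ G ∧ y ∈ G)) →
      (∀ H ∈ Hs, ¬(x ∈ H ∧ y ∈ H)) → ∃! b, b ∈ Bs ∧ x ∈ b ∧ y ∈ b
  withinG : ∀ G ∈ Gs, ∀ x ∈ G, ∀ y ∈ G, x ≠ y → ∀ b ∈ Bs, ¬(x ∈ b ∧ y ∈ b)
  withinH : ∀ H ∈ Hs, ∀ x ∈ H, ∀ y ∈ H, x ≠ y → ∀ b ∈ Bs, ¬(x ∈ b ∧ y ∈ b)

/-- Existence of a `K`-DGDD with multiset of group sizes `tG`, multiset of hole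
sizes `tH`, in which every group meets every hole in exactly `meet` points. -/
def DGDDExists (K : Set ℕ) (tG tH : Multiset ℕ) (meet : ℕ) : Prop :=
  ∃ (V : Type) (_ : Fintype V) (Gs Hs : Multiset (Finset V)) (Bs : Finset (Finset V)),
    IsDGDD V Gs Hs Bs K ∧ Gs.map Finset.card = tG ∧ Hs.map Finset.card = tH ∧
      ∀ G ∈ Gs, ∀ H ∈ Hs, ∃ S : Finset V, S.card = meet ∧ ∀ x : V, x ∈ S ↔ x ∈ G ∧ x ∈ H

/-!
Carry the DGDD over to `V ⊕ M`, the `m` new points `M` forming one more group, and enlarge each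
hole `H` to `H ⊕ M`. The old blocks cover every pair from different groups except those inside
an enlarged hole, and two enlarged holes share only pairs inside the group `M`. Each enlarged hole,
with the traces `G ∩ H` of the groups and `M` as groups, has the type (g/4)^u m^1 of the given
4-GDD; a copy of that GDD placed on it covers exactly the missing pairs of that hole.
-/

open Finset Function

section Partition

variable {α : Type} [DecidableEq α] {Gs : Multiset (Finset α)} {x : α}

theorem countP_mem_eq_one_iff :
    Gs.countP (x ∈ ·) = 1 ↔ ∃ G s, Gs = G ::ₘ s ∧ x ∈ G ∧ ∀ G' ∈ s, x ∉ G' := by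
  constructor
  · intro h
    obtain ⟨G, hG, hxG⟩ := Multiset.countP_pos.1 (h ▸ Nat.one_pos)
    refine ⟨G, Gs.erase G, (Multiset.cons_erase hG).symm, hxG, Multiset.countP_eq_zero.1 ?_⟩
    rw [← Multiset.cons_erase hG, Multiset.countP_cons, if_pos hxG] at h
    omega
  · rintro ⟨G, s, rfl, hxG, hs⟩
    rw [Multiset.countP_cons, if_pos hxG, Multiset.countP_eq_zero.2 hs]

theorem notMem_of_countP_cons_le_one {G : Finset α} (h : (G ::ₘ Gs).countP (x ∈ ·) ≤ 1)
    (hx : x ∈ G) : ∀ G' ∈ Gs, x ∉ G' := by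
  rw [Multiset.countP_cons, if_pos hx] at h
  exact Multiset.countP_eq_zero.1 (by omega)

theorem eq_of_countP_mem_le_one (h : Gs.countP (x ∈ ·) ≤ 1) {G G' : Finset α} (hG : G ∈ Gs)
    (hG' : G' ∈ Gs) (hx : x ∈ G) (hx' : x ∈ G') : G = G' := by
  by_contra hne
  rw [← Multiset.cons_erase hG] at h
  exact notMem_of_countP_cons_le_one h hx G' ((Multiset.mem_erase_of_ne (Ne.symm hne)).2 hG') hx'

theorem countP_mem_map_inter_le (Gs : Multiset (Finset α)) (T : Finset α) (x : α) :
    (Gs.map (· ∩ T)).countP (x ∈ ·) ≤ Gs.countP (x ∈ ·) := by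
  induction Gs using Multiset.induction_on with
  | empty => simp
  | cons G Gs ih =>
    simp only [Multiset.map_cons, Multiset.countP_cons, mem_inter]
    split_ifs <;> grind

end Partition

theorem exists_injOn_map_image_eq {α β : Type} [DecidableEq α] [DecidableEq β] (f₀ : α → β)
    {As : Multiset (Finset α)} {Bs : Multiset (Finset β)}
    (hAB : Multiset.Rel (fun a b => a.card = b.card) As Bs)
    (hA : ∀ x, As.countP (x ∈ ·) ≤ 1) (hB : ∀ y, Bs.countP (y ∈ ·) ≤ 1) :
    ∃ f : α → β, Set.InjOn f {x | ∃ a ∈ As, x ∈ a} ∧ As.map (Finset.image f) = Bs := by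
  induction hAB with
  | zero => exact ⟨f₀, by simp, rfl⟩
  | @cons a b A B hab _ ih =>
    obtain ⟨f', hinj', hmap'⟩ := ih
      (fun x => (Multiset.countP_le_of_le _ (Multiset.le_cons_self _ _)).trans (hA x))
      (fun y => (Multiset.countP_le_of_le _ (Multiset.le_cons_self _ _)).trans (hB y))
    let e := Finset.equivOfCardEq hab
    let f x := if h : x ∈ a then (e ⟨x, h⟩ : β) else f' x
    have hfa : ∀ x (hx : x ∈ a), f x = e ⟨x, hx⟩ := fun x hx => dif_pos hx
    have hfA : Set.EqOn f' f {x | ∃ a' ∈ A, x ∈ a'} := by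
      rintro x ⟨a', ha', hx⟩
      have hxa : x ∉ a := fun hxa => notMem_of_countP_cons_le_one (hA x) hxa a' ha' hx
      simp only [f, dif_neg hxa]
    have himage : a.image f = b := by
      ext y
      simp only [mem_image]
      constructor
      · rintro ⟨x, hx, rfl⟩
        exact hfa x hx ▸ (e ⟨x, hx⟩).2
      · intro hy
        exact ⟨e.symm ⟨y, hy⟩, (e.symm ⟨y, hy⟩).2, by simp [hfa]⟩
    have hunion : {x | ∃ a' ∈ a ::ₘ A, x ∈ a'} = ↑a ∪ {x | ∃ a' ∈ A, x ∈ a'} := by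
      ext x
      simp [or_and_right, exists_or]
    refine ⟨f, ?_, ?_⟩
    · rw [hunion, Set.injOn_union]
      · refine ⟨fun x hx y hy hxy => ?_, hinj'.congr hfA, ?_⟩
        · rw [hfa x hx, hfa y hy] at hxy
          exact congrArg Subtype.val (e.injective (Subtype.ext hxy))
        · rintro x hx y ⟨a', ha', hy⟩ hxy
          have hfy : f y ∈ a'.image f' := hfA ⟨a', ha', hy⟩ ▸ mem_image_of_mem f' hy
          exact notMem_of_countP_cons_le_one (hB (f x)) (hfa x hx ▸ (e ⟨x, hx⟩).2)
            (a'.image f') (hmap' ▸ Multiset.mem_map_of_mem _ ha') (hxy ▸ hfy)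
      · rw [Set.disjoint_left]
        rintro x hx ⟨a', ha', hx'⟩
        exact notMem_of_countP_cons_le_one (hA x) hx a' ha' hx'
    · rw [Multiset.map_cons, himage, ← hmap']
      congr 1
      exact Multiset.map_congr rfl fun a' ha' => image_congr fun x hx => (hfA ⟨a', ha', hx⟩).symm

theorem exists_embedding_map_eq {W X : Type} [DecidableEq W] [DecidableEq X]
    {Ws : Multiset (Finset W)} {Ps : Multiset (Finset X)}
    (hW : ∀ w : W, ∃ G s, Ws = G ::ₘ s ∧ w ∈ G ∧ ∀ G' ∈ s, w ∉ G')
    (hP : ∀ x, Ps.countP (x ∈ ·) ≤ 1) (hcard : Ws.map Finset.card = Ps.map Finset.card) :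
    ∃ f : W ↪ X, Ws.map (Finset.map f) = Ps := by
  have hWs : ∀ w, Ws.countP (w ∈ ·) = 1 := fun w => countP_mem_eq_one_iff.2 (hW w)
  have hrel : Multiset.Rel (fun a b => a.card = b.card) Ws Ps := by
    rwa [← Multiset.rel_eq, Multiset.rel_map] at hcard
  have hX : ∀ w : W, Nonempty X := fun w => by
    obtain ⟨G, hG, hwG⟩ := Multiset.countP_pos.1 ((hWs w).symm ▸ Nat.one_pos)
    obtain ⟨P, -, hGP⟩ := Multiset.exists_mem_of_rel_of_mem hrel hG
    obtain ⟨x, -⟩ := card_pos.1 (hGP ▸ card_pos.2 ⟨w, hwG⟩)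
    exact ⟨x⟩
  obtain ⟨f, hinj, hmap⟩ := exists_injOn_map_image_eq (fun w => (hX w).some) hrel
    (fun w => (hWs w).le) hP
  have hcover : {w | ∃ G ∈ Ws, w ∈ G} = Set.univ :=
    Set.eq_univ_of_forall fun w => Multiset.countP_pos.1 ((hWs w).symm ▸ Nat.one_pos)
  refine ⟨⟨f, Set.injOn_univ.1 (hcover ▸ hinj)⟩, ?_⟩
  rw [← hmap]
  exact Multiset.map_congr rfl fun G _ => map_eq_image _ _

/-- A GDD inside a larger type: its points are those covered by the groups, which are not
required to be disjoint. -/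
structure IsGDDIn {X : Type} (Gs : Multiset (Finset X)) (Bs : Finset (Finset X)) (K : Set ℕ) :
    Prop where
  subset : ∀ b ∈ Bs, ∀ x ∈ b, ∃ G ∈ Gs, x ∈ G
  sizes : ∀ b ∈ Bs, b.card ∈ K
  cross : ∀ x y, x ≠ y → (∃ G ∈ Gs, x ∈ G) → (∃ G ∈ Gs, y ∈ G) →
    (∀ G ∈ Gs, ¬(x ∈ G ∧ y ∈ G)) → ∃! b, b ∈ Bs ∧ x ∈ b ∧ y ∈ b
  within : ∀ G ∈ Gs, ∀ x ∈ G, ∀ y ∈ G, x ≠ y → ∀ b ∈ Bs, ¬(x ∈ b ∧ y ∈ b)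

theorem existsUnique_mem_image_map {W X : Type} [DecidableEq X] (f : W ↪ X)
    {Cs : Finset (Finset W)} {x y : W} (h : ∃! c, c ∈ Cs ∧ x ∈ c ∧ y ∈ c) :
    ∃! b, b ∈ Cs.image (Finset.map f) ∧ f x ∈ b ∧ f y ∈ b := by
  obtain ⟨c, hc, huniq⟩ := h
  refine ⟨c.map f, by simpa using hc, ?_⟩
  rintro _ ⟨hb, hx, hy⟩
  obtain ⟨c', hc', rfl⟩ := mem_image.1 hb
  rw [mem_map' f] at hx hy
  rw [huniq c' ⟨hc', hx, hy⟩]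

theorem IsGDD.map {W X : Type} [DecidableEq X] {Ws : Multiset (Finset W)}
    {Cs : Finset (Finset W)} {K : Set ℕ} (h : IsGDD W Ws Cs K) (f : W ↪ X) :
    IsGDDIn (Ws.map (Finset.map f)) (Cs.image (Finset.map f)) K where
  subset := by
    simp only [mem_image, Multiset.mem_map, forall_exists_index, and_imp]
    rintro _ c - rfl _ hx
    obtain ⟨w, -, rfl⟩ := mem_map.1 hx
    obtain ⟨G, s, rfl, hwG, -⟩ := h.partition w
    exact ⟨_, ⟨G, Multiset.mem_cons_self G s, rfl⟩, mem_map_of_mem f hwG⟩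
  sizes := by
    simp only [mem_image, forall_exists_index, and_imp]
    rintro _ c hc rfl
    simpa using h.sizes c hc
  cross := by
    simp only [Multiset.mem_map, forall_exists_index, and_imp]
    rintro _ _ hxy _ G - rfl hx _ G' - rfl hy hgroups
    obtain ⟨w, -, rfl⟩ := mem_map.1 hx
    obtain ⟨w', -, rfl⟩ := mem_map.1 hy
    refine existsUnique_mem_image_map f (h.cross w w' (f.injective.ne_iff.1 hxy) ?_)
    rintro G hG ⟨hw, hw'⟩
    exact hgroups _ G hG rfl ⟨mem_map_of_mem f hw, mem_map_of_mem f hw'⟩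
  within := by
    simp only [Multiset.mem_map, mem_image, forall_exists_index, and_imp]
    rintro _ G hG rfl _ hx _ hy hxy _ c hc rfl ⟨hxc, hyc⟩
    obtain ⟨w, hw, rfl⟩ := mem_map.1 hx
    obtain ⟨w', hw', rfl⟩ := mem_map.1 hy
    rw [mem_map' f] at hxc hyc
    exact h.within G hG w hw w' hw' (fun h => hxy (h ▸ rfl)) c hc ⟨hxc, hyc⟩

/-- A GDD with holes: pairs inside a hole are left uncovered, like pairs inside a group.
Unlike the holes of a DGDD, two holes may overlap, but only inside a single group. -/
structure IsHoleyGDD {X : Type} (Gs : Multiset (Finset X)) (Hs Bs : Finset (Finset X))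
    (K : Set ℕ) : Prop where
  partition : ∀ x : X, ∃ G s, Gs = G ::ₘ s ∧ x ∈ G ∧ ∀ G' ∈ s, x ∉ G'
  sizes : ∀ b ∈ Bs, b.card ∈ K
  cross : ∀ x y : X, x ≠ y → (∀ G ∈ Gs, ¬(x ∈ G ∧ y ∈ G)) →
    (∀ H ∈ Hs, ¬(x ∈ H ∧ y ∈ H)) → ∃! b, b ∈ Bs ∧ x ∈ b ∧ y ∈ b
  withinG : ∀ G ∈ Gs, ∀ x ∈ G, ∀ y ∈ G, x ≠ y → ∀ b ∈ Bs, ¬(x ∈ b ∧ y ∈ b)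
  withinH : ∀ H ∈ Hs, ∀ x ∈ H, ∀ y ∈ H, x ≠ y → ∀ b ∈ Bs, ¬(x ∈ b ∧ y ∈ b)
  inter : ∀ H ∈ Hs, ∀ H' ∈ Hs, H ≠ H' → ∀ x ∈ H, ∀ y ∈ H, x ∈ H' → y ∈ H' →
    ∃ G ∈ Gs, x ∈ G ∧ y ∈ G

section Filling

variable {X : Type} [DecidableEq X] {Gs : Multiset (Finset X)} {Hs Bs : Finset (Finset X)}
  {K : Set ℕ} {C : Finset X → Finset (Finset X)}

theorem IsGDDIn.mem_of_mem_block {H : Finset X} {Cs : Finset (Finset X)}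
    (h : IsGDDIn (Gs.map (· ∩ H)) Cs K) {b : Finset X} (hb : b ∈ Cs) {x : X} (hx : x ∈ b) :
    x ∈ H := by
  obtain ⟨P, hP, hxP⟩ := h.subset b hb x hx
  obtain ⟨G, -, rfl⟩ := Multiset.mem_map.1 hP
  exact (mem_inter.1 hxP).2

theorem IsHoleyGDD.exists_mem_map_inter (h : IsHoleyGDD Gs Hs Bs K) {H : Finset X} {x : X}
    (hx : x ∈ H) : ∃ P ∈ Gs.map (· ∩ H), x ∈ P := by
  obtain ⟨G, s, rfl, hxG, -⟩ := h.partition x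
  exact ⟨G ∩ H, Multiset.mem_map_of_mem _ (Multiset.mem_cons_self G s), mem_inter.2 ⟨hxG, hx⟩⟩

theorem IsHoleyGDD.existsUnique_mem_union_biUnion (h : IsHoleyGDD Gs Hs Bs K)
    (hC : ∀ H ∈ Hs, IsGDDIn (Gs.map (· ∩ H)) (C H) K) {x y : X} (hxy : x ≠ y)
    (hG : ∀ G ∈ Gs, ¬(x ∈ G ∧ y ∈ G)) : ∃! b, b ∈ Bs ∪ Hs.biUnion C ∧ x ∈ b ∧ y ∈ b := by
  simp only [mem_union, mem_biUnion]
  by_cases hH : ∃ H ∈ Hs, x ∈ H ∧ y ∈ H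
  · obtain ⟨H, hH, hxH, hyH⟩ := hH
    have hP : ∀ P ∈ Gs.map (· ∩ H), ¬(x ∈ P ∧ y ∈ P) := by
      rintro _ hP ⟨hxP, hyP⟩
      obtain ⟨G, hG', rfl⟩ := Multiset.mem_map.1 hP
      exact hG G hG' ⟨(mem_inter.1 hxP).1, (mem_inter.1 hyP).1⟩
    obtain ⟨b, ⟨hb, hxb, hyb⟩, huniq⟩ := (hC H hH).cross x y hxy
      (h.exists_mem_map_inter hxH) (h.exists_mem_map_inter hyH) hP
    refine ⟨b, ⟨Or.inr ⟨H, hH, hb⟩, hxb, hyb⟩, ?_⟩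
    rintro b' ⟨hb' | ⟨H', hH', hb'⟩, hxb', hyb'⟩
    · exact absurd ⟨hxb', hyb'⟩ (h.withinH H hH x hxH y hyH hxy b' hb')
    · obtain rfl | hne := eq_or_ne H' H
      · exact huniq b' ⟨hb', hxb', hyb'⟩
      · obtain ⟨G, hG', hxG, hyG⟩ := h.inter H' hH' H hH hne x
          ((hC H' hH').mem_of_mem_block hb' hxb') y ((hC H' hH').mem_of_mem_block hb' hyb') hxH hyH
        exact absurd ⟨hxG, hyG⟩ (hG G hG')
  · push Not at hH
    obtain ⟨b, hb, huniq⟩ := h.cross x y hxy hG fun H hH' ⟨hxH, hyH⟩ => hH H hH' hxH hyH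
    refine ⟨b, ⟨Or.inl hb.1, hb.2⟩, ?_⟩
    rintro b' ⟨hb' | ⟨H, hH', hb'⟩, hxb', hyb'⟩
    · exact huniq b' ⟨hb', hxb', hyb'⟩
    · exact absurd ((hC H hH').mem_of_mem_block hb' hyb')
        (hH H hH' ((hC H hH').mem_of_mem_block hb' hxb'))

theorem IsHoleyGDD.isGDD_union_biUnion (h : IsHoleyGDD Gs Hs Bs K)
    (hC : ∀ H ∈ Hs, IsGDDIn (Gs.map (· ∩ H)) (C H) K) :
    IsGDD X Gs (Bs ∪ Hs.biUnion C) K := by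
  refine ⟨h.partition, ?_, fun x y hxy hG => h.existsUnique_mem_union_biUnion hC hxy hG, ?_⟩
  · simp only [mem_union, mem_biUnion]
    rintro b (hb | ⟨H, hH, hb⟩)
    exacts [h.sizes b hb, (hC H hH).sizes b hb]
  · simp only [mem_union, mem_biUnion]
    rintro G hG x hx y hy hxy b (hb | ⟨H, hH, hb⟩) ⟨hxb, hyb⟩
    · exact h.withinG G hG x hx y hy hxy b hb ⟨hxb, hyb⟩
    · exact (hC H hH).within (G ∩ H) (Multiset.mem_map_of_mem _ hG)
        x (mem_inter.2 ⟨hx, (hC H hH).mem_of_mem_block hb hxb⟩)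
        y (mem_inter.2 ⟨hy, (hC H hH).mem_of_mem_block hb hyb⟩) hxy b hb ⟨hxb, hyb⟩

end Filling

def extendGroups {V : Type} (M : Type) [Fintype M] (Gs : Multiset (Finset V)) :
    Multiset (Finset (V ⊕ M)) :=
  Gs.map (·.map Embedding.inl) + {univ.map Embedding.inr}

section Extension

variable {V M : Type} [DecidableEq V] [DecidableEq M] [Fintype M]
  {Gs Hs : Multiset (Finset V)} {Bs : Finset (Finset V)} {K : Set ℕ}

theorem countP_mem_extendGroups (Gs : Multiset (Finset V)) (x : V ⊕ M) :
    (extendGroups M Gs).countP (x ∈ ·) = Sum.elim (fun v => Gs.countP (v ∈ ·)) (fun _ => 1) x := by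
  rw [extendGroups, Multiset.countP_add, Multiset.countP_map, ← Multiset.countP_eq_card_filter]
  cases x <;> simp [← Multiset.cons_zero]

theorem IsDGDD.isHoleyGDD_sum (h : IsDGDD V Gs Hs Bs K) :
    IsHoleyGDD (extendGroups M Gs) (Hs.toFinset.image (·.disjSum univ))
      (Bs.image (·.map Embedding.inl)) K where
  partition x := countP_mem_eq_one_iff.1 <| by
    rw [countP_mem_extendGroups]
    cases x with
    | inl v => exact countP_mem_eq_one_iff.2 (h.gpartition v)
    | inr j => rfl
  sizes := by
    simp only [mem_image, forall_exists_index, and_imp]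
    rintro _ b hb rfl
    simpa using h.sizes b hb
  cross := by
    have hM : univ.map Embedding.inr ∈ extendGroups M Gs :=
      Multiset.mem_add.2 (Or.inr (Multiset.mem_singleton_self _))
    have hT : ∀ H ∈ Hs, H.disjSum (univ : Finset M) ∈ Hs.toFinset.image (·.disjSum univ) :=
      fun H hH => mem_image_of_mem _ (Multiset.mem_toFinset.2 hH)
    have hhole : ∀ v, ∃ H ∈ Hs, v ∈ H := fun v => by
      obtain ⟨H, s, rfl, hv, -⟩ := h.hpartition v
      exact ⟨H, Multiset.mem_cons_self H s, hv⟩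
    rintro (v | j) (v' | j') hxy hG hH
    · refine existsUnique_mem_image_map Embedding.inl (h.cross v v' (fun h => hxy (h ▸ rfl)) ?_ ?_)
      · rintro G hG' ⟨hv, hv'⟩
        exact hG _ (Multiset.mem_add.2 (Or.inl (Multiset.mem_map_of_mem _ hG')))
          ⟨mem_map_of_mem _ hv, mem_map_of_mem _ hv'⟩
      · rintro H hH' ⟨hv, hv'⟩
        exact hH _ (hT H hH') ⟨inl_mem_disjSum.2 hv, inl_mem_disjSum.2 hv'⟩
    · obtain ⟨H, hH', hv⟩ := hhole v
      exact absurd ⟨inl_mem_disjSum.2 hv, inr_mem_disjSum.2 (mem_univ j')⟩ (hH _ (hT H hH'))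
    · obtain ⟨H, hH', hv⟩ := hhole v'
      exact absurd ⟨inr_mem_disjSum.2 (mem_univ j), inl_mem_disjSum.2 hv⟩ (hH _ (hT H hH'))
    · exact absurd ⟨by simp, by simp⟩ (hG _ hM)
  withinG := by
    simp only [extendGroups, Multiset.mem_add, Multiset.mem_map, Multiset.mem_singleton,
      mem_image]
    rintro _ (⟨G, hG, rfl⟩ | rfl) x hx y hy hxy _ ⟨b, hb, rfl⟩ ⟨hxb, hyb⟩
    · obtain ⟨v, hv, rfl⟩ := mem_map.1 hx
      obtain ⟨v', hv', rfl⟩ := mem_map.1 hy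
      simp only [mem_map' Embedding.inl] at hxb hyb
      exact h.withinG G hG v hv v' hv' (fun h => hxy (h ▸ rfl)) b hb ⟨hxb, hyb⟩
    · obtain ⟨j, -, rfl⟩ := mem_map.1 hx
      simp at hxb
  withinH := by
    simp only [mem_image, Multiset.mem_toFinset]
    rintro _ ⟨H, hH, rfl⟩ x hx y hy hxy _ ⟨b, hb, rfl⟩ ⟨hxb, hyb⟩
    obtain ⟨v, hvb, rfl⟩ := mem_map.1 hxb
    obtain ⟨v', hv'b, rfl⟩ := mem_map.1 hyb
    simp only [Embedding.inl_apply, inl_mem_disjSum] at hx hy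
    exact h.withinH H hH v hx v' hy (fun h => hxy (h ▸ rfl)) b hb ⟨hvb, hv'b⟩
  inter := by
    simp only [mem_image, Multiset.mem_toFinset]
    rintro _ ⟨H, hH, rfl⟩ _ ⟨H', hH', rfl⟩ hne x hx y hy hx' hy'
    have hHH' : H ≠ H' := fun h => hne (h ▸ rfl)
    have hnew : ∀ z : V ⊕ M, z ∈ H.disjSum univ → z ∈ H'.disjSum univ → ∃ j, z = Sum.inr j := by
      rintro (v | j) hz hz'
      · rw [inl_mem_disjSum] at hz hz'
        exact absurd (eq_of_countP_mem_le_one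
          (countP_mem_eq_one_iff.2 (h.hpartition v)).le hH hH' hz hz') hHH'
      · exact ⟨j, rfl⟩
    obtain ⟨j, rfl⟩ := hnew x hx hx'
    obtain ⟨j', rfl⟩ := hnew y hy hy'
    exact ⟨_, Multiset.mem_add.2 (Or.inr (Multiset.mem_singleton_self _)), by simp, by simp⟩

theorem card_map_inter_disjSum (Gs : Multiset (Finset V)) (H : Finset V) :
    ((extendGroups M Gs).map (· ∩ H.disjSum univ)).map card =
      Gs.map (fun G => (G ∩ H).card) + {Fintype.card M} := by
  have hinl : ∀ G : Finset V, G.map Embedding.inl ∩ H.disjSum univ =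
      (G ∩ H).map (Embedding.inl : V ↪ V ⊕ M) := fun G => by
    ext (v | j) <;> simp
  have hinr : univ.map (Embedding.inr : M ↪ V ⊕ M) ∩ H.disjSum univ = univ.map Embedding.inr := by
    ext (v | j) <;> simp
  simp [extendGroups, Multiset.map_map, hinl, hinr]

end Extension

/-- Filling the holes: if there is a 4-DGDD of type (g, (g/4)^4)^u (here
g = 4·k) and a 4-GDD of type (g/4)^u m^1, then there is a 4-GDD of type
g^u m^1. -/
theorem stmt_14 (k u m : ℕ)
    (hD : DGDDExists {4} (Multiset.replicate u (4 * k))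
      (Multiset.replicate 4 (k * u)) k)
    (hF : GDDExists {4} (Multiset.replicate u k + {m})) :
    GDDExists {4} (Multiset.replicate u (4 * k) + {m}) := by
  classical
  obtain ⟨V, _, Gs, Hs, Bs, hD, hGs, -, hmeet⟩ := hD
  obtain ⟨W, _, Ws, Cs, hF, hWs⟩ := hF
  have hu : Multiset.card Gs = u := by simpa using congrArg Multiset.card hGs
  have hGH : ∀ G ∈ Gs, ∀ H ∈ Hs, (G ∩ H).card = k := fun G hG H hH => by
    obtain ⟨S, rfl, hS⟩ := hmeet G hG H hH
    exact congrArg card (ext fun x => by rw [hS, mem_inter]).symm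
  have hholey := hD.isHoleyGDD_sum (M := Fin m)
  have hfill : ∀ T ∈ Hs.toFinset.image (·.disjSum (univ : Finset (Fin m))), ∃ C,
      IsGDDIn ((extendGroups (Fin m) Gs).map (· ∩ T)) C {4} := by
    simp only [mem_image, Multiset.mem_toFinset, forall_exists_index, and_imp]
    rintro _ H hH rfl
    obtain ⟨f, hf⟩ := exists_embedding_map_eq hF.partition
      (fun x => (countP_mem_map_inter_le _ _ x).trans
        (countP_mem_eq_one_iff.2 (hholey.partition x)).le)
      (by rw [hWs, card_map_inter_disjSum, Multiset.map_congr rfl fun G hG => hGH G hG H hH,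
        Multiset.map_const', hu, Fintype.card_fin])
    exact ⟨_, hf ▸ hF.map f⟩
  choose! C hC using hfill
  refine ⟨V ⊕ Fin m, inferInstance, _, _, hholey.isGDD_union_biUnion hC, ?_⟩
  simp [extendGroups, Multiset.map_map, hGs]
end
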